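/- arXiv:2403.11608 — 3 statements merged into one kernel-verified Lean document; each statement's English description precedes it below -/
import Mathlib

section
/- For all integers n ≥ 1 and k ≥ 1, the alternating sum (-1)^{k-1} · Σ_{j=-k}^{k-1} (-1)^j · p(n - j(3j+1)/2) is nonnegative, where p is the partition function (with p(m) = 0 for m < 0). -/
noncomputable section

/-- The partition function, extended to the integers by `p m = 0` for `m < 0`. -/
def p (m : ℤ) : ℤ := if 0 ≤ m then Nat.card (Nat.Partition m.toNat) else 0

/-- `(-1)^j` for an integer `j`. -/
def zsgn (j : ℤ) : ℤ := if Even j then 1 else -1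

namespace AM
open Multiset

lemma card_le_sum' {s : Multiset ℕ} (h : ∀ x ∈ s, 0 < x) : Multiset.card s ≤ s.sum := by
  induction s using Multiset.induction with
  | empty => simp
  | cons a t ih =>
    have ha := h a (Multiset.mem_cons_self a t)
    have ht := fun x hx => h x (Multiset.mem_cons_of_mem hx)
    simp only [Multiset.card_cons, Multiset.sum_cons]
    have := ih ht
    omega

lemma sup_mem {s : Multiset ℕ} (hs : s ≠ 0) : s.sup ∈ s := by
  induction s using Multiset.induction with
  | empty => exact absurd rfl hs
  | cons a t ih =>
    rw [Multiset.sup_cons]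
    rcases eq_or_ne t 0 with rfl | ht
    · simp
    · rcases le_total a t.sup with h | h
      · rw [sup_eq_right.2 h]; exact Multiset.mem_cons_of_mem (ih ht)
      · rw [sup_eq_left.2 h]; exact Multiset.mem_cons_self a t

def strip (s : Multiset ℕ) : Multiset ℕ := (s.map (· - 1)).filter (· ≠ 0)

lemma strip_eq {s : Multiset ℕ} (hpos : ∀ x ∈ s, 0 < x) :
    strip s = (s.filter (· ≠ 1)).map (· - 1) := by
  rw [strip, Multiset.filter_map]
  congr 1
  apply Multiset.filter_congr
  intro x hx
  have := hpos x hx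
  simp only [Function.comp_apply, ne_eq]
  omega

lemma key_id {s : Multiset ℕ} (hpos : ∀ x ∈ s, 0 < x) :
    (strip s).map (· + 1) + Multiset.replicate (s.count 1) 1 = s := by
  rw [strip_eq hpos, Multiset.map_map]
  have h1 : (s.filter (· ≠ 1)).map ((· + 1) ∘ (· - 1)) = (s.filter (· ≠ 1)).map id := by
    apply Multiset.map_congr rfl
    intro x hx
    have h2 := Multiset.mem_of_mem_filter hx
    have := hpos x h2
    have h3 : x ≠ 1 := by simpa using Multiset.of_mem_filter hx
    simp only [Function.comp_apply, id_eq]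
    omega
  rw [h1, Multiset.map_id, ← Multiset.filter_eq']
  have h3 : s.filter (· = 1) = s.filter (fun a => ¬ a ≠ 1) := by
    apply Multiset.filter_congr; intro x _; simp
  rw [h3, Multiset.filter_add_not]

lemma sum_map_succ (u : Multiset ℕ) : (u.map (· + 1)).sum = u.sum + Multiset.card u := by
  induction u using Multiset.induction with
  | empty => simp
  | cons a t ih => simp only [Multiset.map_cons, Multiset.sum_cons, Multiset.card_cons, ih]; omega

lemma card_strip {s : Multiset ℕ} (hpos : ∀ x ∈ s, 0 < x) :
    Multiset.card (strip s) + s.count 1 = Multiset.card s := by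
  have := congrArg Multiset.card (key_id hpos)
  simpa using this

lemma sum_map_pred {s : Multiset ℕ} (hpos : ∀ x ∈ s, 0 < x) :
    (s.map (· - 1)).sum + Multiset.card s = s.sum := by
  induction s using Multiset.induction with
  | empty => simp
  | cons a t ih =>
    have ha := hpos a (Multiset.mem_cons_self a t)
    have ht := fun x hx => hpos x (Multiset.mem_cons_of_mem hx)
    simp only [Multiset.map_cons, Multiset.sum_cons, Multiset.card_cons]
    have := ih ht
    omega

lemma sum_filter_ne_zero (u : Multiset ℕ) : (u.filter (· ≠ 0)).sum = u.sum := by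
  induction u using Multiset.induction with
  | empty => simp
  | cons a t ih =>
    rcases eq_or_ne a 0 with rfl | ha
    · simp [Multiset.filter_cons, ih]
    · simp [Multiset.filter_cons, ha, ih, Multiset.singleton_add]

/-! ### the two maps -/

def fwdParts (j : ℤ) (s : Multiset ℕ) : Multiset ℕ :=
  ((((Multiset.card s : ℤ) + 3 * j - 1).toNat) ::ₘ s.map (· - 1)).filter (· ≠ 0)

def bwdParts (j : ℤ) (s : Multiset ℕ) : Multiset ℕ :=
  (s.erase s.sup).map (· + 1) +
    Multiset.replicate ((s.sup : ℤ) - 3 * j + 1 - (Multiset.card (s.erase s.sup) : ℤ)).toNat 1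

lemma fwd_pos {j : ℤ} {s : Multiset ℕ} : ∀ x ∈ fwdParts j s, 0 < x := by
  intro x hx
  have := Multiset.of_mem_filter hx
  omega

lemma bwd_pos {j : ℤ} {s : Multiset ℕ} : ∀ x ∈ bwdParts j s, 0 < x := by
  intro x hx
  rcases Multiset.mem_add.1 hx with h | h
  · rcases Multiset.mem_map.1 h with ⟨y, _, rfl⟩; omega
  · rw [Multiset.eq_of_mem_replicate h]; omega

lemma fwd_sum {j : ℤ} {s : Multiset ℕ} (hpos : ∀ x ∈ s, 0 < x)
    (h0 : 0 ≤ (Multiset.card s : ℤ) + 3 * j - 1) :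
    ((fwdParts j s).sum : ℤ) = (s.sum : ℤ) + 3 * j - 1 := by
  rw [fwdParts, sum_filter_ne_zero, Multiset.sum_cons]
  have h1 := sum_map_pred hpos
  omega

/-- the degenerate case: head is zero -/
lemma deg {j : ℤ} {s : Multiset ℕ} (hpos : ∀ x ∈ s, 0 < x)
    (hdown : (s.sup : ℤ) ≤ (Multiset.card s : ℤ) + 3 * j)
    (hE : s = 0 → 1 ≤ 3 * j)
    (hd0 : ((Multiset.card s : ℤ) + 3 * j - 1).toNat = 0) :
    fwdParts j s = 0 ∧ s = Multiset.replicate (Multiset.card s) 1 ∧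
      (Multiset.card s : ℤ) + 3 * j = 1 := by
  have hle : (Multiset.card s : ℤ) + 3 * j - 1 ≤ 0 := Int.toNat_eq_zero.1 hd0
  have hs0 : s ≠ 0 := by
    intro h
    have := hE h
    rw [h] at hle
    simp at hle
    omega
  have hc : 0 < Multiset.card s := Multiset.card_pos.2 hs0
  have hsup : 0 < s.sup := hpos _ (sup_mem hs0)
  have h1 : (Multiset.card s : ℤ) + 3 * j = 1 := by omega
  have hsup1 : s.sup = 1 := by omega
  have hall : ∀ x ∈ s, x = 1 := by
    intro x hx
    have h2 := Multiset.le_sup hx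
    have h3 := hpos x hx
    omega
  refine ⟨?_, Multiset.eq_replicate_card.2 hall, h1⟩
  rw [fwdParts, hd0, Multiset.filter_cons]
  simp only [ne_eq, not_true_eq_false, if_false, zero_add]
  rw [Multiset.filter_eq_nil]
  intro y hy
  rcases Multiset.mem_map.1 hy with ⟨x, hx, rfl⟩
  simp [hall x hx]

lemma main_shape {j : ℤ} {s : Multiset ℕ} (hpos : ∀ x ∈ s, 0 < x)
    (hdown : (s.sup : ℤ) ≤ (Multiset.card s : ℤ) + 3 * j)
    (hd0 : ((Multiset.card s : ℤ) + 3 * j - 1).toNat ≠ 0) :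
    fwdParts j s = (((Multiset.card s : ℤ) + 3 * j - 1).toNat) ::ₘ strip s ∧
      ((((Multiset.card s : ℤ) + 3 * j - 1).toNat) ::ₘ strip s).sup
        = ((Multiset.card s : ℤ) + 3 * j - 1).toNat := by
  constructor
  · rw [fwdParts, Multiset.filter_cons]
    simp only [ne_eq, hd0, not_false_eq_true, if_true, Multiset.singleton_add]
    rfl
  · rw [Multiset.sup_cons, sup_eq_left]
    apply Multiset.sup_le.2
    intro y hy
    have h2 := Multiset.of_mem_filter hy
    rcases Multiset.mem_map.1 (Multiset.mem_of_mem_filter hy) with ⟨x, hx, rfl⟩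
    have h3 := Multiset.le_sup hx
    have h4 : 1 ≤ (Multiset.card s : ℤ) + 3 * j - 1 := by
      rcases Int.lt_or_le 0 ((Multiset.card s : ℤ) + 3 * j - 1) with h | h
      · omega
      · exact absurd (by omega : ((Multiset.card s : ℤ) + 3 * j - 1) ≤ 0)
          (fun hh => hd0 (Int.toNat_eq_zero.2 hh))
    have h5 : ((((Multiset.card s : ℤ) + 3 * j - 1).toNat : ℤ))
        = (Multiset.card s : ℤ) + 3 * j - 1 := Int.toNat_of_nonneg (by omega)
    omega

lemma fwd_up {j : ℤ} {s : Multiset ℕ} (hpos : ∀ x ∈ s, 0 < x)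
    (hdown : (s.sup : ℤ) ≤ (Multiset.card s : ℤ) + 3 * j)
    (hE : s = 0 → 1 ≤ 3 * j) :
    (Multiset.card (fwdParts j s) : ℤ) + (3 * j - 3) < ((fwdParts j s).sup : ℤ) := by
  by_cases hd0 : ((Multiset.card s : ℤ) + 3 * j - 1).toNat = 0
  · obtain ⟨hP, hrep, h1⟩ := deg hpos hdown hE hd0
    have hs0 : s ≠ 0 := by intro h; rw [h] at h1; simp at h1; omega
    have hc : 0 < Multiset.card s := Multiset.card_pos.2 hs0
    rw [hP]
    simp only [Multiset.card_zero, Multiset.sup_zero, Nat.bot_eq_zero]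
    push_cast
    omega
  · obtain ⟨hP, hsup⟩ := main_shape hpos hdown hd0
    rw [hP, hsup, Multiset.card_cons]
    have h4 : 1 ≤ (Multiset.card s : ℤ) + 3 * j - 1 := by
      rcases Int.lt_or_le 0 ((Multiset.card s : ℤ) + 3 * j - 1) with h | h
      · omega
      · exact absurd (by omega : ((Multiset.card s : ℤ) + 3 * j - 1) ≤ 0)
          (fun hh => hd0 (Int.toNat_eq_zero.2 hh))
    have h5 : ((((Multiset.card s : ℤ) + 3 * j - 1).toNat : ℤ))
        = (Multiset.card s : ℤ) + 3 * j - 1 := Int.toNat_of_nonneg (by omega)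
    have h6 := card_strip hpos
    push_cast
    omega

lemma sup_zero_nat : (0 : Multiset ℕ).sup = 0 := rfl

lemma bwd_card {j : ℤ} {s : Multiset ℕ}
    (hup : (Multiset.card s : ℤ) + (3 * j - 3) < (s.sup : ℤ)) :
    (Multiset.card (bwdParts j s) : ℤ) = (s.sup : ℤ) - 3 * j + 1 := by
  have hcard : Multiset.card (bwdParts j s)
      = Multiset.card (s.erase s.sup)
        + ((s.sup : ℤ) - 3 * j + 1 - (Multiset.card (s.erase s.sup) : ℤ)).toNat := by
    simp [bwdParts]
  rcases eq_or_ne s 0 with rfl | h0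
  · rw [hcard]
    rw [Multiset.erase_zero, sup_zero_nat] at *
    simp only [Multiset.card_zero] at *
    push_cast at hup ⊢
    omega
  · have he : Multiset.card (s.erase s.sup) = Multiset.card s - 1 :=
      Multiset.card_erase_of_mem (sup_mem h0)
    have hc : 0 < Multiset.card s := Multiset.card_pos.2 h0
    rw [hcard]
    push_cast
    omega

lemma bwd_sum {j : ℤ} {s : Multiset ℕ} (hpos : ∀ x ∈ s, 0 < x)
    (hup : (Multiset.card s : ℤ) + (3 * j - 3) < (s.sup : ℤ)) :
    ((bwdParts j s).sum : ℤ) = (s.sum : ℤ) - 3 * j + 1 := by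
  have hsum : (bwdParts j s).sum
      = ((s.erase s.sup).map (· + 1)).sum
        + ((s.sup : ℤ) - 3 * j + 1 - (Multiset.card (s.erase s.sup) : ℤ)).toNat := by
    simp [bwdParts, Multiset.sum_replicate]
  rw [hsum, sum_map_succ]
  rcases eq_or_ne s 0 with rfl | h0
  · rw [Multiset.erase_zero, sup_zero_nat] at *
    simp only [Multiset.card_zero, Multiset.sum_zero] at *
    push_cast at hup ⊢
    omega
  · have he : Multiset.card (s.erase s.sup) = Multiset.card s - 1 :=
      Multiset.card_erase_of_mem (sup_mem h0)
    have hc : 0 < Multiset.card s := Multiset.card_pos.2 h0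
    have hes : (s.erase s.sup).sum + s.sup = s.sum := by
      have h5 : s.sum = s.sum := rfl
      have h6 : (s.sup ::ₘ s.erase s.sup).sum = s.sup + (s.erase s.sup).sum :=
        Multiset.sum_cons _ _
      rw [Multiset.cons_erase (sup_mem h0)] at h6
      omega
    omega

lemma bwd_down {j : ℤ} {s : Multiset ℕ} (hpos : ∀ x ∈ s, 0 < x)
    (hup : (Multiset.card s : ℤ) + (3 * j - 3) < (s.sup : ℤ)) :
    ((bwdParts j s).sup : ℤ) ≤ (Multiset.card (bwdParts j s) : ℤ) + 3 * j := by
  have h1 : (bwdParts j s).sup ≤ s.sup + 1 := by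
    apply Multiset.sup_le.2
    intro x hx
    rcases Multiset.mem_add.1 hx with h | h
    · rcases Multiset.mem_map.1 h with ⟨y, hy, rfl⟩
      have := Multiset.le_sup (Multiset.mem_of_mem_erase hy)
      omega
    · rw [Multiset.eq_of_mem_replicate h]
      omega
  have h2 := bwd_card (s := s) (j := j) hup
  omega

lemma bwd_fwd {j : ℤ} {s : Multiset ℕ} (hpos : ∀ x ∈ s, 0 < x)
    (hdown : (s.sup : ℤ) ≤ (Multiset.card s : ℤ) + 3 * j)
    (hE : s = 0 → 1 ≤ 3 * j) :
    bwdParts j (fwdParts j s) = s := by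
  by_cases hd0 : ((Multiset.card s : ℤ) + 3 * j - 1).toNat = 0
  · obtain ⟨hP, hrep, h1⟩ := deg hpos hdown hE hd0
    rw [hP]
    have h2 : (((0 : Multiset ℕ).sup : ℤ) - 3 * j + 1
        - (Multiset.card ((0 : Multiset ℕ).erase (0 : Multiset ℕ).sup) : ℤ))
        = ((Multiset.card s : ℕ) : ℤ) := by
      rw [Multiset.erase_zero, sup_zero_nat]
      simp only [Multiset.card_zero]
      push_cast
      omega
    rw [bwdParts, h2, Int.toNat_natCast, Multiset.erase_zero, Multiset.map_zero, zero_add]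
    exact hrep.symm
  · obtain ⟨hP, hsup⟩ := main_shape hpos hdown hd0
    have h5 : ((((Multiset.card s : ℤ) + 3 * j - 1).toNat : ℤ))
        = (Multiset.card s : ℤ) + 3 * j - 1 := by omega
    rw [hP, bwdParts, hsup, Multiset.erase_cons_head]
    have h6 := card_strip hpos
    have h7 : ((((Multiset.card s : ℤ) + 3 * j - 1).toNat : ℤ) - 3 * j + 1
        - (Multiset.card (strip s) : ℤ)) = ((s.count 1 : ℕ) : ℤ) := by
      push_cast
      omega
    rw [h7, Int.toNat_natCast]
    exact key_id hpos

lemma fwd_bwd {j : ℤ} {s : Multiset ℕ} (hpos : ∀ x ∈ s, 0 < x)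
    (hup : (Multiset.card s : ℤ) + (3 * j - 3) < (s.sup : ℤ)) :
    fwdParts j (bwdParts j s) = s := by
  rcases eq_or_ne s 0 with rfl | h0
  · have hj : 3 * j ≤ 0 := by
      rw [sup_zero_nat] at hup
      simp only [Multiset.card_zero] at hup
      push_cast at hup
      omega
    have h1 : bwdParts j 0 = Multiset.replicate ((1 - 3 * j).toNat) 1 := by
      rw [bwdParts, Multiset.erase_zero, Multiset.map_zero, zero_add, sup_zero_nat]
      congr 1
      simp only [Multiset.card_zero]
      push_cast
      omega
    rw [h1, fwdParts]
    have h2 : (((Multiset.card (Multiset.replicate ((1 - 3 * j).toNat) (1 : ℕ)) : ℤ)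
        + 3 * j - 1)).toNat = 0 := by
      rw [Multiset.card_replicate]
      omega
    rw [h2, Multiset.map_replicate]
    rw [Multiset.filter_eq_nil]
    intro a ha
    rcases Multiset.mem_cons.1 ha with rfl | h
    · simp
    · rw [Multiset.eq_of_mem_replicate h]; simp
  · have hb : 0 < s.sup := hpos _ (sup_mem h0)
    have hc : 0 < Multiset.card s := Multiset.card_pos.2 h0
    have he : Multiset.card (s.erase s.sup) = Multiset.card s - 1 :=
      Multiset.card_erase_of_mem (sup_mem h0)
    have hcard : Multiset.card (bwdParts j s)
        = Multiset.card (s.erase s.sup)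
          + ((s.sup : ℤ) - 3 * j + 1 - (Multiset.card (s.erase s.sup) : ℤ)).toNat := by
      simp [bwdParts]
    have hd'eq : ((Multiset.card (bwdParts j s) : ℤ) + 3 * j - 1).toNat = s.sup := by
      rw [hcard]
      push_cast
      omega
    rw [fwdParts, hd'eq]
    have hmap : (bwdParts j s).map (· - 1)
        = s.erase s.sup + Multiset.replicate
            ((s.sup : ℤ) - 3 * j + 1 - (Multiset.card (s.erase s.sup) : ℤ)).toNat 0 := by
      rw [bwdParts, Multiset.map_add, Multiset.map_map, Multiset.map_replicate]
      congr 1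
      conv_rhs => rw [← Multiset.map_id (s.erase s.sup)]
      apply Multiset.map_congr rfl
      intro x _
      simp
    rw [hmap, Multiset.filter_cons, Multiset.filter_add]
    have h8 : (s.erase s.sup).filter (· ≠ 0) = s.erase s.sup :=
      Multiset.filter_eq_self.2 fun x hx => by
        have := hpos x (Multiset.mem_of_mem_erase hx); omega
    have h9 : (Multiset.replicate
        ((s.sup : ℤ) - 3 * j + 1 - (Multiset.card (s.erase s.sup) : ℤ)).toNat (0 : ℕ)).filter
          (· ≠ 0) = 0 := by
      rw [Multiset.filter_eq_nil]
      intro a ha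
      simp [Multiset.eq_of_mem_replicate ha]
    have hbne : s.sup ≠ 0 := by omega
    rw [h8, h9, add_zero]
    simp only [ne_eq, hbne, not_false_eq_true, if_true, Multiset.singleton_add]
    exact Multiset.cons_erase (sup_mem h0)

/-! ### partition-level -/

def IsDown (c : ℤ) {N : ℕ} (q : Nat.Partition N) : Prop :=
  (q.parts.sup : ℤ) ≤ (Multiset.card q.parts : ℤ) + c

def IsUp (c : ℤ) {N : ℕ} (q : Nat.Partition N) : Prop :=
  (Multiset.card q.parts : ℤ) + c < (q.parts.sup : ℤ)

lemma parts_eq_zero_iff {N : ℕ} (q : Nat.Partition N) : q.parts = 0 ↔ N = 0 := by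
  constructor
  · intro h; rw [← q.parts_sum, h]; rfl
  · intro h; subst h; exact Nat.Partition.partition_zero_parts q

lemma sup_pos_of_ne {N : ℕ} (q : Nat.Partition N) (h : q.parts ≠ 0) : 0 < q.parts.sup :=
  q.parts_pos (sup_mem h)

lemma card_pos_of_ne {N : ℕ} (q : Nat.Partition N) (h : q.parts ≠ 0) :
    0 < Multiset.card q.parts := by
  rwa [Multiset.card_pos]

/-- decomposition facts for a nonempty partition -/
lemma sum_facts {N : ℕ} (q : Nat.Partition N) (h : q.parts ≠ 0) :
    q.parts.sup + (Multiset.card q.parts - 1) ≤ N := by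
  have hmem := sup_mem h
  have h1 : q.parts = q.parts.sup ::ₘ q.parts.erase q.parts.sup := (Multiset.cons_erase hmem).symm
  have h2 : (q.parts.erase q.parts.sup).sum + q.parts.sup = N := by
    have h5 : q.parts.sum = N := q.parts_sum
    rw [h1, Multiset.sum_cons] at h5
    omega
  have h3 : Multiset.card (q.parts.erase q.parts.sup) = Multiset.card q.parts - 1 := by
    rw [Multiset.card_erase_of_mem hmem]; rfl
  have h4 : Multiset.card (q.parts.erase q.parts.sup) ≤ (q.parts.erase q.parts.sup).sum :=
    card_le_sum' fun x hx => q.parts_pos (Multiset.mem_of_mem_erase hx)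
  omega

lemma down_hd_nonneg {j : ℤ} {N₁ N₂ : ℕ} (hN : (N₂ : ℤ) = (N₁ : ℤ) + 3 * j - 1)
    {q : Nat.Partition N₁} (hq : IsDown (3 * j) q) :
    0 ≤ (Multiset.card q.parts : ℤ) + 3 * j - 1 := by
  rcases eq_or_ne q.parts 0 with h0 | h0
  · have hN₁ : N₁ = 0 := (parts_eq_zero_iff q).1 h0
    have hc : Multiset.card q.parts = 0 := by rw [h0]; rfl
    have : (0:ℤ) ≤ (N₂ : ℤ) := Int.natCast_nonneg _
    rw [hc]; push_cast
    omega
  · have h1 := sup_pos_of_ne q h0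
    have := hq
    unfold IsDown at this
    omega

lemma down_N2_nonneg {j : ℤ} {N₁ : ℕ} {q : Nat.Partition N₁} (hq : IsDown (3 * j) q)
    (hne : q.parts = 0 → j ≠ 0) : 0 ≤ (N₁ : ℤ) + 3 * j - 1 := by
  rcases eq_or_ne q.parts 0 with h0 | h0
  · have hN₁ : N₁ = 0 := (parts_eq_zero_iff q).1 h0
    have hj := hne h0
    have hc : Multiset.card q.parts = 0 := by rw [h0]; rfl
    have hs : q.parts.sup = 0 := by rw [h0]; rfl
    unfold IsDown at hq
    rw [hc, hs] at hq
    push_cast at hq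
    omega
  · have h1 := sup_pos_of_ne q h0
    have h2 := card_pos_of_ne q h0
    have h3 := sum_facts q h0
    unfold IsDown at hq
    omega

lemma up_N1_nonneg {j : ℤ} {N₂ : ℕ} {r : Nat.Partition N₂} (hr : IsUp (3 * j - 3) r) :
    0 ≤ (N₂ : ℤ) - 3 * j + 1 := by
  rcases eq_or_ne r.parts 0 with h0 | h0
  · have hc : Multiset.card r.parts = 0 := by rw [h0]; rfl
    have hs : r.parts.sup = 0 := by rw [h0]; rfl
    unfold IsUp at hr
    rw [hc, hs] at hr
    have : (0:ℤ) ≤ (N₂ : ℤ) := Int.natCast_nonneg _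
    push_cast at hr
    omega
  · have h1 := sup_pos_of_ne r h0
    have h2 := card_pos_of_ne r h0
    have h3 : r.parts.sup ≤ N₂ := by
      have h4 : r.parts.sum = N₂ := r.parts_sum
      have h5 := Multiset.le_sum_of_mem (sup_mem h0)
      omega
    unfold IsUp at hr
    omega


def downUpEquiv (j : ℤ) (N₁ N₂ : ℕ) (hN : (N₂ : ℤ) = (N₁ : ℤ) + 3 * j - 1) :
    {q : Nat.Partition N₁ // IsDown (3 * j) q} ≃ {r : Nat.Partition N₂ // IsUp (3 * j - 3) r} where
  toFun x :=
    ⟨⟨fwdParts j x.1.parts, fun hi => fwd_pos _ hi, by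
        have h0 : 0 ≤ (Multiset.card x.1.parts : ℤ) + 3 * j - 1 := down_hd_nonneg hN x.2
        have h1 := fwd_sum (fun y hy => x.1.parts_pos hy) h0
        have hs : x.1.parts.sum = N₁ := x.1.parts_sum
        omega⟩, by
      have hE : x.1.parts = 0 → 1 ≤ 3 * j := by
        intro h
        have hN₁ : N₁ = 0 := (parts_eq_zero_iff x.1).1 h
        have h2 : (0:ℤ) ≤ (N₂ : ℤ) := Int.natCast_nonneg _
        omega
      exact fwd_up (fun y hy => x.1.parts_pos hy) x.2 hE⟩
  invFun y :=
    ⟨⟨bwdParts j y.1.parts, fun hi => bwd_pos _ hi, by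
        have h1 := bwd_sum (fun z hz => y.1.parts_pos hz) y.2
        have hs : y.1.parts.sum = N₂ := y.1.parts_sum
        omega⟩,
      bwd_down (fun z hz => y.1.parts_pos hz) y.2⟩
  left_inv x := by
    apply Subtype.ext
    apply Nat.Partition.ext
    show bwdParts j (fwdParts j x.1.parts) = x.1.parts
    have hE : x.1.parts = 0 → 1 ≤ 3 * j := by
      intro h
      have hN₁ : N₁ = 0 := (parts_eq_zero_iff x.1).1 h
      have h2 : (0:ℤ) ≤ (N₂ : ℤ) := Int.natCast_nonneg _
      omega
    exact bwd_fwd (fun y hy => x.1.parts_pos hy) x.2 hE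
  right_inv y := by
    apply Subtype.ext
    apply Nat.Partition.ext
    show fwdParts j (bwdParts j y.1.parts) = y.1.parts
    exact fwd_bwd (fun z hz => y.1.parts_pos hz) y.2

/-! ### integer level -/

def g (j : ℤ) : ℤ := j * (3 * j + 1) / 2

lemma two_g (j : ℤ) : 2 * g j = j * (3 * j + 1) := by
  have h : (2:ℤ) ∣ j * (3 * j + 1) := by
    rcases Int.even_or_odd j with ⟨m, hm⟩ | ⟨m, hm⟩
    · exact ⟨m * (3 * j + 1), by rw [hm]; ring⟩
    · exact ⟨j * (3 * m + 2), by rw [hm]; ring⟩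
  rw [g, Int.mul_ediv_cancel' h]

lemma g_sub (j : ℤ) : g j - g (j - 1) = 3 * j - 1 := by
  have h1 := two_g j
  have h2 := two_g (j - 1)
  have h3 : 2 * g j - 2 * g (j - 1) = 2 * (3 * j - 1) := by rw [h1, h2]; ring
  omega

lemma g_zero : g 0 = 0 := by norm_num [g]

def Dcount (n j : ℤ) : ℕ :=
  if 0 ≤ n - g j then Nat.card {q : Nat.Partition (n - g j).toNat // IsDown (3 * j) q} else 0

def Ucount (n j : ℤ) : ℕ :=
  if 0 ≤ n - g j then Nat.card {r : Nat.Partition (n - g j).toNat // IsUp (3 * j) r} else 0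

lemma card_split (N : ℕ) (c : ℤ) :
    Nat.card (Nat.Partition N) =
      Nat.card {q : Nat.Partition N // IsDown c q} + Nat.card {q : Nat.Partition N // IsUp c q} := by
  classical
  have e : {q : Nat.Partition N // IsUp c q} ≃ {q : Nat.Partition N // ¬ IsDown c q} :=
    Equiv.subtypeEquivRight fun q => by
      unfold IsUp IsDown
      constructor
      · intro h; omega
      · intro h; omega
  rw [Nat.card_congr e]
  simp only [Nat.card_eq_fintype_card]
  rw [Fintype.card_subtype, Fintype.card_subtype, ← Finset.card_univ,
    ← Finset.card_filter_add_card_filter_not (p := fun q => IsDown c q)]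

lemma p_split (n j : ℤ) : p (n - g j) = (Dcount n j : ℤ) + (Ucount n j : ℤ) := by
  unfold p Dcount Ucount
  by_cases h : 0 ≤ n - g j
  · rw [if_pos h, if_pos h, if_pos h, card_split ((n - g j).toNat) (3 * j)]
    push_cast
    ring
  · rw [if_neg h, if_neg h, if_neg h]
    simp

lemma step (n : ℤ) (hn : 1 ≤ n) (j : ℤ) : Dcount n j = Ucount n (j - 1) := by
  have hg := g_sub j
  by_cases h1 : 0 ≤ n - g j <;> by_cases h2 : 0 ≤ n - g (j - 1)
  · simp only [Dcount, Ucount, if_pos h1, if_pos h2]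
    have hN : ((n - g (j - 1)).toNat : ℤ) = ((n - g j).toNat : ℤ) + 3 * j - 1 := by omega
    have h3 : (3:ℤ) * (j - 1) = 3 * j - 3 := by ring
    rw [h3]
    exact Nat.card_congr (downUpEquiv j ((n - g j).toNat) ((n - g (j - 1)).toNat) hN)
  · simp only [Dcount, Ucount, if_pos h1, if_neg h2]
    have hIE : IsEmpty {q : Nat.Partition (n - g j).toNat // IsDown (3 * j) q} := by
      constructor
      rintro ⟨q, hq⟩
      have hne : q.parts = 0 → j ≠ 0 := by
        intro h hj0
        subst hj0
        have hN₁ : (n - g 0).toNat = 0 := (parts_eq_zero_iff q).1 h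
        have := g_zero
        omega
      have hb := down_N2_nonneg hq hne
      have hc : ((n - g j).toNat : ℤ) = n - g j := Int.toNat_of_nonneg h1
      omega
    exact Nat.card_of_isEmpty
  · simp only [Dcount, Ucount, if_neg h1, if_pos h2]
    symm
    have hIE : IsEmpty {r : Nat.Partition (n - g (j - 1)).toNat // IsUp (3 * (j - 1)) r} := by
      constructor
      rintro ⟨r, hr⟩
      have hr' : IsUp (3 * j - 3) r := by
        rw [show (3:ℤ) * j - 3 = 3 * (j - 1) by ring]
        exact hr
      have hb := up_N1_nonneg hr'
      have hc : ((n - g (j - 1)).toNat : ℤ) = n - g (j - 1) := Int.toNat_of_nonneg h2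
      omega
    exact Nat.card_of_isEmpty
  · simp only [Dcount, Ucount, if_neg h1, if_neg h2]

/-! ### conjugation -/

def conj (s : Multiset ℕ) : Multiset ℕ :=
  (Multiset.range s.sup).map fun i => s.countP (fun x => i + 1 ≤ x)

lemma conj_zero : conj 0 = 0 := by simp [conj, sup_zero_nat]

lemma ite_sum (m a : ℕ) :
    ((Multiset.range m).map fun i => if i + 1 ≤ a then (1:ℕ) else 0).sum = min a m := by
  induction m with
  | zero => simp
  | succ m ih =>
    rw [Multiset.range_succ, Multiset.map_cons, Multiset.sum_cons, ih]
    by_cases h : m + 1 ≤ a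
    · rw [if_pos h]; omega
    · rw [if_neg h]; omega

lemma conj_sum_aux (m : ℕ) (s : Multiset ℕ) (hb : ∀ x ∈ s, x ≤ m) :
    ((Multiset.range m).map fun i => s.countP (fun x => i + 1 ≤ x)).sum = s.sum := by
  revert hb
  induction s using Multiset.induction with
  | empty => intro _; simp
  | cons a t ih =>
    intro hb
    have ha : a ≤ m := hb a (Multiset.mem_cons_self a t)
    have ht : ∀ x ∈ t, x ≤ m := fun x hx => hb x (Multiset.mem_cons_of_mem hx)
    have h1 : ((Multiset.range m).map fun i => (a ::ₘ t).countP (fun x => i + 1 ≤ x))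
        = (Multiset.range m).map fun i =>
            t.countP (fun x => i + 1 ≤ x) + (if i + 1 ≤ a then 1 else 0) := by
      apply Multiset.map_congr rfl
      intro i _
      rw [Multiset.countP_cons]
    rw [h1, Multiset.sum_map_add, ih ht, ite_sum, Multiset.sum_cons]
    omega

lemma conj_sum {s : Multiset ℕ} : (conj s).sum = s.sum :=
  conj_sum_aux s.sup s fun _ hx => Multiset.le_sup hx

lemma conj_card {s : Multiset ℕ} : Multiset.card (conj s) = s.sup := by
  simp [conj]

lemma conj_pos {s : Multiset ℕ} : ∀ x ∈ conj s, 0 < x := by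
  intro x hx
  rcases Multiset.mem_map.1 hx with ⟨i, hi, rfl⟩
  have him : i < s.sup := Multiset.mem_range.1 hi
  have hs0 : s ≠ 0 := by
    intro h
    rw [h, sup_zero_nat] at him
    omega
  exact Multiset.countP_pos.2 ⟨s.sup, sup_mem hs0, by omega⟩

lemma conj_sup {s : Multiset ℕ} (hpos : ∀ x ∈ s, 0 < x) :
    (conj s).sup = Multiset.card s := by
  rcases eq_or_ne s 0 with rfl | h0
  · simp [conj_zero, sup_zero_nat]
  · apply le_antisymm
    · apply Multiset.sup_le.2
      intro x hx
      rcases Multiset.mem_map.1 hx with ⟨i, _, rfl⟩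
      exact Multiset.countP_le_card _ _
    · have h1 : 0 < s.sup := hpos _ (sup_mem h0)
      have h2 : (0:ℕ) ∈ Multiset.range s.sup := Multiset.mem_range.2 h1
      have h3 : s.countP (fun x => 0 + 1 ≤ x) = Multiset.card s :=
        Multiset.countP_eq_card.2 fun a ha => by have := hpos a ha; omega
      have h4 : Multiset.card s ∈ conj s := by
        rw [← h3]; exact Multiset.mem_map_of_mem _ h2
      exact Multiset.le_sup h4

lemma sup_strip {s : Multiset ℕ} (h0 : s ≠ 0) : (strip s).sup = s.sup - 1 := by
  apply le_antisymm
  · apply Multiset.sup_le.2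
    intro y hy
    rcases Multiset.mem_map.1 (Multiset.mem_of_mem_filter hy) with ⟨x, hx, rfl⟩
    have := Multiset.le_sup hx
    omega
  · by_cases h2 : 2 ≤ s.sup
    · have hm : s.sup - 1 ∈ strip s := by
        rw [strip]
        apply Multiset.mem_filter.2
        refine ⟨Multiset.mem_map_of_mem _ (sup_mem h0), by omega⟩
      have := Multiset.le_sup hm
      omega
    · omega

lemma countP_strip {s : Multiset ℕ} (hpos : ∀ x ∈ s, 0 < x) (i : ℕ) :
    (strip s).countP (fun x => i + 1 ≤ x) = s.countP (fun x => i + 1 + 1 ≤ x) := by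
  rw [strip_eq hpos, Multiset.countP_map, ← Multiset.countP_eq_card_filter,
    Multiset.countP_filter, Multiset.countP_eq_card_filter, Multiset.countP_eq_card_filter]
  congr 1
  apply Multiset.filter_congr
  intro x hx
  have := hpos x hx
  constructor
  · intro h; omega
  · intro h; omega

lemma conj_cons {s : Multiset ℕ} (hpos : ∀ x ∈ s, 0 < x) (h0 : s ≠ 0) :
    conj s = Multiset.card s ::ₘ conj (strip s) := by
  have h1 : 0 < s.sup := hpos _ (sup_mem h0)
  have hm : s.sup = 1 + (s.sup - 1) := by omega
  rw [conj, hm, Multiset.range_add, Multiset.map_add]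
  have hr1 : (Multiset.range 1).map (fun i => s.countP (fun x => i + 1 ≤ x))
      = {Multiset.card s} := by
    have : Multiset.range 1 = {0} := rfl
    rw [this, Multiset.map_singleton]
    congr 1
    exact Multiset.countP_eq_card.2 fun a ha => by have := hpos a ha; omega
  rw [hr1]
  have hr2 : ((Multiset.range (s.sup - 1)).map (1 + ·)).map
        (fun i => s.countP (fun x => i + 1 ≤ x))
      = conj (strip s) := by
    rw [Multiset.map_map, conj, sup_strip h0]
    apply Multiset.map_congr rfl
    intro i _
    rw [countP_strip hpos i]
    simp only [Function.comp_apply]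
    rw [Multiset.countP_eq_card_filter, Multiset.countP_eq_card_filter]
    congr 1
    apply Multiset.filter_congr
    intro x _
    constructor
    · intro h; omega
    · intro h; omega
  rw [hr2, Multiset.singleton_add]

lemma conj_cons_max {u : Multiset ℕ} {b : ℕ} (hb : ∀ x ∈ u, x ≤ b) :
    conj (b ::ₘ u) = (conj u).map (· + 1) + Multiset.replicate (b - u.sup) 1 := by
  have hub : u.sup ≤ b := Multiset.sup_le.2 hb
  have hsup : (b ::ₘ u).sup = b := by
    rw [Multiset.sup_cons, sup_eq_left.2 hub]
  have hrange : Multiset.range b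
      = Multiset.range u.sup + (Multiset.range (b - u.sup)).map (u.sup + ·) := by
    rw [← Multiset.range_add]
    congr 1
    omega
  rw [conj, hsup, hrange, Multiset.map_add]
  congr 1
  · rw [conj, Multiset.map_map]
    apply Multiset.map_congr rfl
    intro i hi
    have him : i < u.sup := Multiset.mem_range.1 hi
    simp only [Function.comp_apply]
    rw [Multiset.countP_cons, if_pos (by omega)]
  · rw [Multiset.map_map]
    have : ∀ i ∈ Multiset.range (b - u.sup),
        ((fun i => (b ::ₘ u).countP (fun x => i + 1 ≤ x)) ∘ (u.sup + ·)) i = 1 := by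
      intro i hi
      have him : i < b - u.sup := Multiset.mem_range.1 hi
      simp only [Function.comp_apply]
      rw [Multiset.countP_cons, if_pos (by omega)]
      have hz : u.countP (fun x => u.sup + i + 1 ≤ x) = 0 :=
        Multiset.countP_eq_zero.2 fun a ha => by
          have := Multiset.le_sup ha; omega
      rw [hz]
    rw [Multiset.map_congr rfl this, Multiset.map_const', Multiset.card_range]

lemma conj_conj_aux : ∀ (B : ℕ) (s : Multiset ℕ), s.sum ≤ B → (∀ x ∈ s, 0 < x) →
    conj (conj s) = s := by
  intro B
  induction B with
  | zero =>
    intro s hB hpos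
    have hs0 : s = 0 := by
      by_contra h0
      have h1 : 0 < s.sup := hpos _ (sup_mem h0)
      have h2 := Multiset.le_sum_of_mem (sup_mem h0)
      omega
    rw [hs0, conj_zero, conj_zero]
  | succ B ih =>
    intro s hB hpos
    rcases eq_or_ne s 0 with rfl | h0
    · rw [conj_zero, conj_zero]
    · rw [conj_cons hpos h0]
      have hstrippos : ∀ x ∈ strip s, 0 < x := fun x hx => by
        have := Multiset.of_mem_filter hx; omega
      have hub : ∀ x ∈ conj (strip s), x ≤ Multiset.card s := by
        intro x hx
        rcases Multiset.mem_map.1 hx with ⟨i, _, rfl⟩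
        have h1 := Multiset.countP_le_card (fun x => i + 1 ≤ x) (strip s)
        have h2 := card_strip hpos
        omega
      rw [conj_cons_max hub]
      have hc : 0 < Multiset.card s := Multiset.card_pos.2 h0
      have hstripsum : (strip s).sum ≤ B := by
        have h1 : (strip s).sum = (s.map (· - 1)).sum := by
          rw [strip, sum_filter_ne_zero]
        have h2 := sum_map_pred hpos
        omega
      rw [ih (strip s) hstripsum hstrippos, conj_sup hstrippos]
      have h6 := card_strip hpos
      have h7 : Multiset.card s - Multiset.card (strip s) = s.count 1 := by omega
      rw [h7]
      exact key_id hpos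

lemma conj_conj {s : Multiset ℕ} (hpos : ∀ x ∈ s, 0 < x) : conj (conj s) = s :=
  conj_conj_aux s.sum s le_rfl hpos

/-! ### the boundary injection -/

def injParts (k : ℕ) (s : Multiset ℕ) : Multiset ℕ :=
  ((conj s).sup + (2 * k - 1)) ::ₘ (conj s).erase (conj s).sup

lemma inj_basic {k : ℕ} (hk : 1 ≤ k) {s : Multiset ℕ} (hpos : ∀ x ∈ s, 0 < x)
    (hdown : (s.sup : ℤ) ≤ (Multiset.card s : ℤ) - 3 * k) :
    s ≠ 0 ∧ conj s ≠ 0 := by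
  have h0 : s ≠ 0 := by
    intro h
    rw [h, sup_zero_nat] at hdown
    simp only [Multiset.card_zero] at hdown
    push_cast at hdown
    omega
  have h1 : 0 < s.sup := hpos _ (sup_mem h0)
  have h2 : conj s ≠ 0 := by
    intro h
    have h3 : Multiset.card (conj s) = s.sup := conj_card
    rw [h] at h3
    simp at h3
    omega
  exact ⟨h0, h2⟩

lemma inj_pos {k : ℕ} (hk : 1 ≤ k) {s : Multiset ℕ} :
    ∀ x ∈ injParts k s, 0 < x := by
  intro x hx
  rcases Multiset.mem_cons.1 hx with rfl | h
  · omega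
  · exact conj_pos _ (Multiset.mem_of_mem_erase h)

lemma inj_sum {k : ℕ} (hk : 1 ≤ k) {s : Multiset ℕ} (hpos : ∀ x ∈ s, 0 < x)
    (hdown : (s.sup : ℤ) ≤ (Multiset.card s : ℤ) - 3 * k) :
    ((injParts k s).sum : ℤ) = (s.sum : ℤ) + 2 * k - 1 := by
  obtain ⟨h0, h2⟩ := inj_basic hk hpos hdown
  have hce : (conj s).sup + ((conj s).erase (conj s).sup).sum = (conj s).sum := by
    have h6 := Multiset.sum_cons (conj s).sup ((conj s).erase (conj s).sup)
    rw [Multiset.cons_erase (sup_mem h2)] at h6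
    omega
  have hcs : (conj s).sum = s.sum := conj_sum
  rw [injParts, Multiset.sum_cons]
  omega

lemma inj_card {k : ℕ} (hk : 1 ≤ k) {s : Multiset ℕ} (hpos : ∀ x ∈ s, 0 < x)
    (hdown : (s.sup : ℤ) ≤ (Multiset.card s : ℤ) - 3 * k) :
    Multiset.card (injParts k s) = s.sup := by
  obtain ⟨h0, h2⟩ := inj_basic hk hpos hdown
  have h1 : 0 < s.sup := hpos _ (sup_mem h0)
  have h3 : Multiset.card (conj s) = s.sup := conj_card
  rw [injParts, Multiset.card_cons, Multiset.card_erase_of_mem (sup_mem h2), h3]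
  have h5 : s.sup.pred = s.sup - 1 := rfl
  omega

lemma inj_sup {k : ℕ} (hk : 1 ≤ k) {s : Multiset ℕ} (hpos : ∀ x ∈ s, 0 < x)
    (hdown : (s.sup : ℤ) ≤ (Multiset.card s : ℤ) - 3 * k) :
    (injParts k s).sup = Multiset.card s + (2 * k - 1) := by
  rw [injParts, Multiset.sup_cons, conj_sup hpos, sup_eq_left]
  apply Multiset.sup_le.2
  intro x hx
  have hx2 : x ∈ conj s := Multiset.mem_of_mem_erase hx
  have h4 := Multiset.le_sup hx2
  rw [conj_sup hpos] at h4
  omega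

lemma inj_up {k : ℕ} (hk : 1 ≤ k) {s : Multiset ℕ} (hpos : ∀ x ∈ s, 0 < x)
    (hdown : (s.sup : ℤ) ≤ (Multiset.card s : ℤ) - 3 * k) :
    (Multiset.card (injParts k s) : ℤ) + 3 * ((k:ℤ) - 1) < ((injParts k s).sup : ℤ) := by
  rw [inj_card hk hpos hdown, inj_sup hk hpos hdown]
  omega

lemma inj_injective {k : ℕ} (hk : 1 ≤ k) {s₁ s₂ : Multiset ℕ}
    (hpos₁ : ∀ x ∈ s₁, 0 < x) (hpos₂ : ∀ x ∈ s₂, 0 < x)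
    (hdown₁ : (s₁.sup : ℤ) ≤ (Multiset.card s₁ : ℤ) - 3 * k)
    (hdown₂ : (s₂.sup : ℤ) ≤ (Multiset.card s₂ : ℤ) - 3 * k)
    (h : injParts k s₁ = injParts k s₂) : s₁ = s₂ := by
  obtain ⟨h01, h21⟩ := inj_basic hk hpos₁ hdown₁
  obtain ⟨h02, h22⟩ := inj_basic hk hpos₂ hdown₂
  have hsup := congrArg Multiset.sup h
  rw [inj_sup hk hpos₁ hdown₁, inj_sup hk hpos₂ hdown₂] at hsup
  have hcard : Multiset.card s₁ = Multiset.card s₂ := by omega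
  have hhead : (conj s₁).sup + (2 * k - 1) = (conj s₂).sup + (2 * k - 1) := by
    rw [conj_sup hpos₁, conj_sup hpos₂, hcard]
  rw [injParts, injParts, hhead] at h
  have he : (conj s₁).erase (conj s₁).sup = (conj s₂).erase (conj s₂).sup :=
    (Multiset.cons_inj_right _).1 h
  have hc1 : conj s₁ = conj s₂ := by
    have e1 : conj s₁ = (conj s₁).sup ::ₘ (conj s₁).erase (conj s₁).sup :=
      (Multiset.cons_erase (sup_mem h21)).symm
    have e2 : conj s₂ = (conj s₂).sup ::ₘ (conj s₂).erase (conj s₂).sup :=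
      (Multiset.cons_erase (sup_mem h22)).symm
    rw [e1, e2, he, conj_sup hpos₁, conj_sup hpos₂, hcard]
  have h9 := congrArg conj hc1
  rwa [conj_conj hpos₁, conj_conj hpos₂] at h9

lemma final_le (n : ℤ) (k : ℕ) (hk : 1 ≤ k) :
    Dcount n (-(k:ℤ)) ≤ Ucount n ((k:ℤ) - 1) := by
  by_cases h1 : 0 ≤ n - g (-(k:ℤ))
  · have hk' : (1:ℤ) ≤ (k:ℤ) := by exact_mod_cast hk
    have hgg : g (-(k:ℤ)) - g ((k:ℤ) - 1) = 2 * (k:ℤ) - 1 := by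
      have ha := two_g (-(k:ℤ))
      have hb := two_g ((k:ℤ) - 1)
      have hc : 2 * g (-(k:ℤ)) - 2 * g ((k:ℤ) - 1) = 2 * (2 * (k:ℤ) - 1) := by
        rw [ha, hb]; ring
      omega
    have h2 : 0 ≤ n - g ((k:ℤ) - 1) := by omega
    simp only [Dcount, Ucount, if_pos h1, if_pos h2]
    have hdown : ∀ (q : Nat.Partition (n - g (-(k:ℤ))).toNat), IsDown (3 * -(k:ℤ)) q →
        (q.parts.sup : ℤ) ≤ (Multiset.card q.parts : ℤ) - 3 * k := by
      intro q hq
      unfold IsDown at hq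
      omega
    set F : {q : Nat.Partition (n - g (-(k:ℤ))).toNat // IsDown (3 * -(k:ℤ)) q} →
        {r : Nat.Partition (n - g ((k:ℤ) - 1)).toNat // IsUp (3 * ((k:ℤ) - 1)) r} :=
      fun q =>
      ⟨⟨injParts k q.1.parts, fun hi => inj_pos hk _ hi, by
          have hs := inj_sum hk (fun y hy => q.1.parts_pos hy) (hdown q.1 q.2)
          have hps : q.1.parts.sum = (n - g (-(k:ℤ))).toNat := q.1.parts_sum
          omega⟩,
        inj_up hk (fun y hy => q.1.parts_pos hy) (hdown q.1 q.2)⟩ with hF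
    apply Nat.card_le_card_of_injective F
    intro q₁ q₂ hqe
    have hpe : injParts k q₁.1.parts = injParts k q₂.1.parts := by
      have := congrArg (fun r => r.1.parts) hqe
      simpa [hF] using this
    have hs := inj_injective hk (fun y hy => q₁.1.parts_pos hy) (fun y hy => q₂.1.parts_pos hy)
      (hdown q₁.1 q₁.2) (hdown q₂.1 q₂.2) hpe
    apply Subtype.ext
    exact Nat.Partition.ext hs
  · simp only [Dcount, if_neg h1]
    exact Nat.zero_le _

/-! ### endgame -/

lemma zsgn_sub (i k : ℕ) : zsgn ((i:ℤ) - (k:ℤ)) = (-1:ℤ)^(i+k) := by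
  unfold zsgn
  have h1 : Even ((i:ℤ) - (k:ℤ)) ↔ (Even i ↔ Even k) := by
    rw [Int.even_sub]
    simp [Int.even_coe_nat]
  by_cases h : Even (i + k)
  · have h2 : Even i ↔ Even k := Nat.even_add.1 h
    rw [if_pos (h1.2 h2), Even.neg_one_pow h]
  · have h2 : ¬(Even i ↔ Even k) := fun hh => h (Nat.even_add.2 hh)
    rw [if_neg fun hc => h2 (h1.1 hc), Odd.neg_one_pow (Nat.not_even_iff_odd.1 h)]

lemma tele (w : ℕ → ℤ) (m : ℕ) :
    ∑ i ∈ Finset.range m, (-1:ℤ)^i * (w i + w (i+1)) = w 0 - (-1:ℤ)^m * w m := by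
  induction m with
  | zero => simp
  | succ m ih => rw [Finset.sum_range_succ, ih, pow_succ]; ring

end AM

/-- For all integers `n ≥ 1` and `k ≥ 1`, the alternating sum
`(-1)^(k-1) · Σ_{j=-k}^{k-1} (-1)^j p(n - j(3j+1)/2)` is nonnegative. -/
theorem truncated_pentagonal_nonneg (n : ℤ) (k : ℕ) (hn : 1 ≤ n) (hk : 1 ≤ k) :
    0 ≤ (-1 : ℤ) ^ (k - 1) *
      ∑ j ∈ Finset.Icc (-(k : ℤ)) ((k : ℤ) - 1), zsgn j * p (n - j * (3 * j + 1) / 2) := by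
  have hrw : ∀ j ∈ Finset.Icc (-(k : ℤ)) ((k : ℤ) - 1),
      zsgn j * p (n - j * (3 * j + 1) / 2)
        = zsgn j * ((AM.Ucount n (j - 1) : ℤ) + (AM.Ucount n j : ℤ)) := by
    intro j _
    have h1 : n - j * (3 * j + 1) / 2 = n - AM.g j := rfl
    rw [h1, AM.p_split, AM.step n hn j]
  rw [Finset.sum_congr rfl hrw]
  have hmap : Finset.Icc (-(k:ℤ)) ((k:ℤ) - 1)
      = (Finset.range (2 * k)).map
          ⟨fun i : ℕ => (i:ℤ) - (k:ℤ), show Function.Injective (fun i : ℕ => (i:ℤ) - (k:ℤ)) from fun a b hab => by simp only at hab; omega⟩ := by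
    ext x
    simp only [Finset.mem_Icc, Finset.mem_map, Finset.mem_range, Function.Embedding.coeFn_mk]
    constructor
    · rintro ⟨ha, hb⟩
      exact ⟨(x + k).toNat, by omega, by omega⟩
    · rintro ⟨i, hi, rfl⟩
      omega
  rw [hmap, Finset.sum_map]
  simp only [Function.Embedding.coeFn_mk]
  set w : ℕ → ℤ := fun i => (AM.Ucount n ((i:ℤ) - (k:ℤ) - 1) : ℤ) with hw
  have hterm : ∀ i ∈ Finset.range (2 * k),
      zsgn ((i:ℤ) - (k:ℤ)) * ((AM.Ucount n ((i:ℤ) - (k:ℤ) - 1) : ℤ)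
          + (AM.Ucount n ((i:ℤ) - (k:ℤ)) : ℤ))
        = (-1:ℤ)^k * ((-1:ℤ)^i * (w i + w (i + 1))) := by
    intro i _
    have e2 : (((i+1:ℕ)):ℤ) - (k:ℤ) - 1 = (i:ℤ) - (k:ℤ) := by push_cast; ring
    have e3 : w (i + 1) = (AM.Ucount n ((i:ℤ) - (k:ℤ)) : ℤ) := by
      rw [hw]
      simp only
      rw [e2]
    have e1 : w i = (AM.Ucount n ((i:ℤ) - (k:ℤ) - 1) : ℤ) := by rw [hw]
    rw [AM.zsgn_sub, pow_add, e3, e1]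
    ring
  rw [Finset.sum_congr rfl hterm, ← Finset.mul_sum, AM.tele w (2 * k)]
  have h2k : ((-1:ℤ))^(2 * k) = 1 := by
    rw [pow_mul]
    norm_num
  have hodd : (-1:ℤ)^(k - 1) * (-1:ℤ)^k = -1 := by
    rw [← pow_add]
    have h3 : k - 1 + k = 2 * (k - 1) + 1 := by omega
    rw [h3, pow_succ, pow_mul]
    norm_num
  have hw0 : w 0 = (AM.Ucount n (-(k:ℤ) - 1) : ℤ) := by
    rw [hw]
    simp only
    have e4 : ((0:ℕ):ℤ) - (k:ℤ) - 1 = -(k:ℤ) - 1 := by push_cast; ring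
    rw [e4]
  have hw2k : w (2 * k) = (AM.Ucount n ((k:ℤ) - 1) : ℤ) := by
    rw [hw]
    simp only
    have e5 : (((2 * k : ℕ)):ℤ) - (k:ℤ) - 1 = (k:ℤ) - 1 := by push_cast; ring
    rw [e5]
  have hle : AM.Ucount n (-(k:ℤ) - 1) ≤ AM.Ucount n ((k:ℤ) - 1) := by
    have h4 := AM.step n hn (-(k:ℤ))
    have h5 := AM.final_le n k hk
    have h6 : -(k:ℤ) - 1 = -(k:ℤ) - 1 := rfl
    omega
  rw [h2k, one_mul, ← mul_assoc, hodd, hw0, hw2k]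
  omega
end
end

section
/- For every positive integer ℓ, as formal power series in q: Σ_{n=1}^{∞} q^{binom(ℓ,2) + (ℓ+1)n} / (q;q)_n · [n-1 choose ℓ-1]_q = q^{(3ℓ^2+ℓ)/2} · Σ_{n=0}^{∞} q^{(2ℓ+1)n + n^2} (1 - q^ℓ) / ((q;q)_n (q;q)_{n+2ℓ} (1 - q^{n+ℓ})). -/
noncomputable section
open PowerSeries

/-- Coefficientwise-stable infinite sum of power series. -/
def iSum (f : ℕ → PowerSeries ℚ) : PowerSeries ℚ :=
  PowerSeries.mk fun n => PowerSeries.coeff (R := ℚ) n (∑ i ∈ Finset.range (n + 1), f i)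

/-- `(q;q)_n`. -/
def pq (n : ℕ) : PowerSeries ℚ := ∏ i ∈ Finset.range n, (1 - X ^ (i + 1))

/-- The Gaussian binomial coefficient `[n choose k]_q` as a power series. -/
def qbinom (n k : ℕ) : PowerSeries ℚ :=
  if k ≤ n then pq n * (pq k)⁻¹ * (pq (n - k))⁻¹ else 0

abbrev PS := PowerSeries ℚ

/-! ### Unit lemmas -/

lemma constCoeff_one_sub_pow (k : ℕ) (hk : 1 ≤ k) :
    constantCoeff (1 - X ^ k : PS) = 1 := by
  obtain ⟨j, rfl⟩ := Nat.exists_eq_add_of_le hk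
  simp [pow_add, map_sub]

lemma one_sub_pow_ne (k : ℕ) (hk : 1 ≤ k) : (1 - X ^ k : PS) ≠ 0 := by
  intro h
  have := constCoeff_one_sub_pow k hk
  rw [h] at this; simp at this

lemma one_sub_pow_mul_inv (k : ℕ) (hk : 1 ≤ k) :
    (1 - X ^ k : PS) * (1 - X ^ k : PS)⁻¹ = 1 :=
  PowerSeries.mul_inv_cancel _ (by rw [constCoeff_one_sub_pow k hk]; norm_num)

lemma pq_zero : pq 0 = 1 := by simp [pq]

lemma pq_succ (n : ℕ) : pq (n + 1) = pq n * (1 - X ^ (n + 1)) := by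
  rw [pq, Finset.prod_range_succ]; rfl

lemma constCoeff_pq (n : ℕ) : constantCoeff (pq n) = 1 := by
  induction n with
  | zero => simp [pq]
  | succ n ih =>
    rw [pq_succ, map_mul, ih, constCoeff_one_sub_pow _ (Nat.succ_le_succ n.zero_le)]; ring

lemma pq_ne (n : ℕ) : (pq n : PS) ≠ 0 := by
  intro h; have := constCoeff_pq n; rw [h] at this; simp at this

lemma pq_mul_inv (n : ℕ) : (pq n : PS) * (pq n)⁻¹ = 1 :=
  PowerSeries.mul_inv_cancel _ (by rw [constCoeff_pq]; norm_num)

/-- `(1 - X^{m+1}) * (pq (m+1))⁻¹ = (pq m)⁻¹` -/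
lemma pq_inv_one_sub (m : ℕ) :
    (1 - X ^ (m+1) : PS) * (pq (m+1))⁻¹ = (pq m)⁻¹ := by
  have h1 : (pq m * (1 - X^(m+1))) * (pq (m+1))⁻¹ = 1 := by
    rw [← pq_succ]; exact pq_mul_inv _
  have h2 := pq_mul_inv m
  linear_combination (pq m)⁻¹ * h1 - (1 - X^(m+1) : PS) * (pq (m+1))⁻¹ * h2

/-- `(pq (m+1))⁻¹ * pq m = (1 - X^{m+1})⁻¹` -/
lemma pq_inv_mul_pq (m : ℕ) :
    (pq (m+1))⁻¹ * pq m = (1 - X ^ (m+1) : PS)⁻¹ := by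
  have h1 := pq_mul_inv (m+1)
  have h2 := one_sub_pow_mul_inv (m+1) (by omega)
  have h3 : pq (m+1) = pq m * (1 - X^(m+1)) := pq_succ m
  linear_combination (1-X^(m+1) : PS)⁻¹ * h1 - (pq (m+1))⁻¹ * pq m * h2
    - (pq (m+1))⁻¹ * (1-X^(m+1) : PS)⁻¹ * h3

/-! ### iSum lemmas -/

def Tame (f : ℕ → PS) : Prop := ∀ i, (X : PS) ^ i ∣ f i

lemma coeff_iSum (f : ℕ → PS) (n : ℕ) :
    coeff (R := ℚ) n (iSum f) = coeff (R := ℚ) n (∑ i ∈ Finset.range (n + 1), f i) := by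
  simp [iSum]

lemma iSum_congr {f g : ℕ → PS} (h : ∀ i, f i = g i) : iSum f = iSum g := by
  have : f = g := funext h
  rw [this]

lemma iSum_add (f g : ℕ → PS) : iSum (fun i => f i + g i) = iSum f + iSum g := by
  ext n; simp [iSum, Finset.sum_add_distrib]

lemma iSum_sub (f g : ℕ → PS) : iSum (fun i => f i - g i) = iSum f - iSum g := by
  ext n; simp [iSum, Finset.sum_sub_distrib]

lemma coeff_X_pow_dvd {A : PS} {i n : ℕ} (h : (X : PS) ^ i ∣ A) (hn : n < i) :
    coeff (R := ℚ) n A = 0 := by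
  obtain ⟨c, rfl⟩ := h
  rw [coeff_X_pow_mul']
  simp [Nat.not_le_of_lt hn, if_neg]

lemma coeff_iSum_stable {f : ℕ → PS} (hf : Tame f) {n M : ℕ} (h : n ≤ M) :
    coeff (R := ℚ) n (iSum f) = coeff (R := ℚ) n (∑ i ∈ Finset.range (M + 1), f i) := by
  rw [coeff_iSum]
  symm
  have : ∀ K, n ≤ K → coeff (R := ℚ) n (∑ i ∈ Finset.range (K + 1), f i)
      = coeff (R := ℚ) n (∑ i ∈ Finset.range (n + 1), f i) := by
    intro K hK
    induction K with
    | zero =>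
      have : n = 0 := by omega
      subst this; rfl
    | succ K ih =>
      rcases Nat.lt_or_ge n (K+1) with h1 | h1
      · rw [Finset.sum_range_succ, map_add, coeff_X_pow_dvd (hf (K+1)) (by omega), add_zero]
        exact ih (by omega)
      · have : n = K + 1 := by omega
        subst this; rfl
  rw [this M h]

lemma iSum_mul {f : ℕ → PS} (hf : Tame f) (c : PS) :
    c * iSum f = iSum (fun i => c * f i) := by
  ext n
  rw [coeff_iSum]
  rw [← Finset.mul_sum]
  rw [coeff_mul, coeff_mul]
  apply Finset.sum_congr rfl
  intro p hp
  rw [Finset.HasAntidiagonal.mem_antidiagonal] at hp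
  congr 1
  have hle : p.2 ≤ n := by omega
  exact coeff_iSum_stable hf hle

lemma iSum_shift {f : ℕ → PS} (hf : Tame f) :
    iSum f = f 0 + iSum (fun i => f (i + 1)) := by
  ext n
  have htame : Tame (fun i => f (i+1)) := by
    intro i
    exact dvd_trans (pow_dvd_pow _ (Nat.le_succ i)) (hf (i+1))
  rw [map_add, coeff_iSum_stable htame (le_refl n)]
  have : coeff (R := ℚ) n (iSum f) = coeff (R := ℚ) n (∑ i ∈ Finset.range (n + 2), f i) :=
    coeff_iSum_stable hf (Nat.le_succ n)
  rw [this]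
  rw [Finset.sum_range_succ']
  rw [map_add]
  ring

lemma eq_zero_of_forall_X_dvd (A : PS) (h : ∀ k, (X : PS) ^ k ∣ A) : A = 0 := by
  ext n
  rw [map_zero]
  exact coeff_X_pow_dvd (h (n+1)) (by omega)

lemma vanish_of_chain (Φ : ℕ → PS) (c : ℕ → PS)
    (hrec : ∀ j, Φ j = c j * Φ (j + 1)) (hc : ∀ j, (X : PS) ∣ c j) (j0 : ℕ) :
    Φ j0 = 0 := by
  apply eq_zero_of_forall_X_dvd
  intro k
  induction k generalizing j0 with
  | zero => exact one_dvd _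
  | succ k ih =>
    rw [hrec j0, pow_succ, mul_comm ((X:PS)^k) X]
    exact mul_dvd_mul (hc j0) (ih (j0+1))

/-! ### The main sums -/

/-- `S_k = Σ_m q^{km}/(q;q)_m` -/
def Sk (k : ℕ) : PS := iSum fun m => X^(k*m) * (pq m)⁻¹

/-- `h_{j,l} = Σ_m q^{jm}/((q;q)_m (1-q^{m+l}))` -/
def hS (j l : ℕ) : PS := iSum fun m => X^(j*m) * (pq m)⁻¹ * (1 - X^(m+l))⁻¹

/-- Durfee rectangle sums `D_k = Σ_m q^{m(m+k)}/((q;q)_m (q;q)_{m+k})` -/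
def DS (k : ℕ) : PS := iSum fun m => X^(m*(m+k)) * (pq m)⁻¹ * (pq (m+k))⁻¹

/-- `Ẽ_k = Σ_m q^{m(m+k+1)}/((q;q)_m (q;q)_{m+k})` -/
def ES (k : ℕ) : PS := iSum fun m => X^(m*(m+k+1)) * (pq m)⁻¹ * (pq (m+k))⁻¹

/-- RHS-side sums -/
def GS (l : ℕ) : PS := iSum fun n => X ^ ((2 * l + 1) * n + n ^ 2) * (1 - X ^ l) *
          (pq n)⁻¹ * (pq (n + 2 * l))⁻¹ * (1 - X ^ (n + l))⁻¹

/-- LHS-side sums (normalized, index shifted) -/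
def Fc (l : ℕ) : PS := (pq (l-1))⁻¹ * hS (l+1) l

/-! ### Tameness -/

lemma tame_Sk (k : ℕ) (hk : 1 ≤ k) : Tame (fun m => (X:PS)^(k*m) * (pq m)⁻¹) := by
  intro i
  exact Dvd.dvd.mul_right (pow_dvd_pow _ (by nlinarith)) _

lemma tame_hS (j l : ℕ) (hj : 1 ≤ j) :
    Tame (fun m => (X:PS)^(j*m) * (pq m)⁻¹ * (1 - X^(m+l))⁻¹) := by
  intro i
  exact Dvd.dvd.mul_right (Dvd.dvd.mul_right (pow_dvd_pow _ (by nlinarith)) _) _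

lemma le_mul_add (m k : ℕ) : m ≤ m * (m + k) := by
  rcases Nat.eq_zero_or_pos m with h | h
  · simp [h]
  · calc m = m * 1 := (mul_one m).symm
    _ ≤ m * (m + k) := Nat.mul_le_mul_left m (by omega)

lemma tame_DS (k : ℕ) : Tame (fun m => (X:PS)^(m*(m+k)) * (pq m)⁻¹ * (pq (m+k))⁻¹) := by
  intro i
  exact Dvd.dvd.mul_right (Dvd.dvd.mul_right (pow_dvd_pow _ (le_mul_add i k)) _) _

lemma tame_ES (k : ℕ) : Tame (fun m => (X:PS)^(m*(m+k+1)) * (pq m)⁻¹ * (pq (m+k))⁻¹) := by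
  intro i
  have : i ≤ i * (i + k + 1) := by
    calc i = i * 1 := (mul_one i).symm
    _ ≤ i * (i+k+1) := Nat.mul_le_mul_left i (by omega)
  exact Dvd.dvd.mul_right (Dvd.dvd.mul_right (pow_dvd_pow _ this) _) _

lemma tame_GS (l : ℕ) : Tame (fun n => (X:PS) ^ ((2 * l + 1) * n + n ^ 2) * (1 - X ^ l) *
          (pq n)⁻¹ * (pq (n + 2 * l))⁻¹ * (1 - X ^ (n + l))⁻¹) := by
  intro i
  have : i ≤ (2*l+1)*i + i^2 := by nlinarith
  exact Dvd.dvd.mul_right (Dvd.dvd.mul_right (Dvd.dvd.mul_right (Dvd.dvd.mul_right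
    (pow_dvd_pow _ this) _) _) _) _

/-! ### S recursion -/

lemma Sk_succ (j : ℕ) (hj : 1 ≤ j) : Sk (j+1) = (1 - X^j) * Sk j := by
  have hW : Sk j - Sk (j+1) = X^j * Sk j := by
    have e1 : Sk j - Sk (j+1)
        = iSum (fun m => X^(j*m) * (1 - X^m) * (pq m)⁻¹) := by
      rw [Sk, Sk, ← iSum_sub]
      apply iSum_congr
      intro m
      ring
    rw [e1]
    have htame : Tame (fun m => (X:PS)^(j*m) * (1 - X^m) * (pq m)⁻¹) := by
      intro i
      exact Dvd.dvd.mul_right (Dvd.dvd.mul_right (pow_dvd_pow _ (by nlinarith)) _) _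
    rw [iSum_shift htame]
    have h0 : (X:PS)^(j*0) * (1 - X^0) * (pq 0)⁻¹ = 0 := by simp
    rw [h0, zero_add]
    have e2 : ∀ m : ℕ, (X:PS)^(j*(m+1)) * (1 - X^(m+1)) * (pq (m+1))⁻¹
        = X^j * (X^(j*m) * (pq m)⁻¹) := by
      intro m
      linear_combination (X^(j*(m+1)) : PS) * pq_inv_one_sub m
    rw [iSum_congr e2, ← iSum_mul (tame_Sk j hj), Sk]
  linear_combination -hW

lemma Sk_prod (l : ℕ) : Sk (l+1) = pq l * Sk 1 := by
  induction l with
  | zero => rw [pq_zero, one_mul]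
  | succ l ih =>
    rw [Sk_succ (l+1) (by omega), ih, pq_succ]
    ring

/-! ### h-identities -/

/-- pole splitting: `h_{j,l} = S_j + q^l h_{j+1,l}` -/
lemma hS_split (j l : ℕ) (hl : 1 ≤ l) :
    hS j l = Sk j + X^l * hS (j+1) l := by
  simp only [hS, Sk]
  rw [iSum_mul (tame_hS (j+1) l (by omega)), ← iSum_add]
  apply iSum_congr
  intro m
  have h1 := one_sub_pow_mul_inv (m+l) (by omega)
  linear_combination (X^(j*m) * (pq m)⁻¹ : PS) * h1

/-- shift: `h_{j,l} - h_{j+1,l} = q^j h_{j,l+1}` -/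
lemma hS_shift (j l : ℕ) (hj : 1 ≤ j) :
    hS j l - hS (j+1) l = X^j * hS j (l+1) := by
  have e1 : hS j l - hS (j+1) l
      = iSum (fun m => X^(j*m) * (1 - X^m) * (pq m)⁻¹ * (1 - X^(m+l))⁻¹) := by
    rw [hS, hS, ← iSum_sub]
    apply iSum_congr
    intro m
    ring
  rw [e1]
  have htame : Tame (fun m => (X:PS)^(j*m) * (1 - X^m) * (pq m)⁻¹ * (1 - X^(m+l))⁻¹) := by
    intro i
    exact Dvd.dvd.mul_right (Dvd.dvd.mul_right (Dvd.dvd.mul_right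
      (pow_dvd_pow _ (by nlinarith)) _) _) _
  rw [iSum_shift htame]
  have h0 : (X:PS)^(j*0) * (1 - X^0) * (pq 0)⁻¹ * (1 - X^(0+l))⁻¹ = 0 := by simp
  rw [h0, zero_add]
  have e2 : ∀ m : ℕ, (X:PS)^(j*(m+1)) * (1 - X^(m+1)) * (pq (m+1))⁻¹ * (1 - X^(m+1+l))⁻¹
      = X^j * (X^(j*m) * (pq m)⁻¹ * (1 - X^(m+(l+1)))⁻¹) := by
    intro m
    have hidx : m + 1 + l = m + (l+1) := by omega
    rw [hidx]
    linear_combination (X^(j*(m+1)) * (1 - X^(m+(l+1)))⁻¹ : PS) * pq_inv_one_sub m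
  rw [iSum_congr e2, ← iSum_mul (tame_hS j (l+1) hj), hS]

/-- Claim A (f-form) -/
lemma claimA_f (l : ℕ) (hl : 1 ≤ l) :
    (1 - X^l) * hS (l+1) l + X^(3*l+2) * hS (l+2) (l+1)
      = (1 - X^(2*l+1)) * Sk (l+1) := by
  have eq1 : hS (l+1) l - hS (l+2) l = X^(l+1) * hS (l+1) (l+1) := hS_shift (l+1) l (by omega)
  have eq2 : hS (l+1) l = Sk (l+1) + X^l * hS (l+2) l := hS_split (l+1) l hl
  have eq3 : hS (l+1) (l+1) = Sk (l+1) + X^(l+1) * hS (l+2) (l+1) := hS_split (l+1) (l+1) (by omega)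
  linear_combination eq2 - (X^l : PS) * eq1 - (X^(2*l+1) : PS) * eq3

/-- Claim A: `F_l + q^{3l+2} F_{l+1} = (1-q^{2l+1}) E` -/
lemma claimA (l : ℕ) (hl : 1 ≤ l) :
    Fc l + X^(3*l+2) * Fc (l+1) = (1 - X^(2*l+1)) * Sk 1 := by
  have h := claimA_f l hl
  rw [Sk_prod l] at h
  -- multiply h by (pq l)⁻¹
  have h2 := congrArg (fun z => (pq l)⁻¹ * z) h
  rw [Fc, Fc]
  have hl1 : l - 1 + 1 = l := by omega
  have hcancel1 : (pq l)⁻¹ * ((1 - X^l) * hS (l+1) l) = (pq (l-1))⁻¹ * hS (l+1) l := by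
    have := pq_inv_one_sub (l-1)
    rw [hl1] at this
    linear_combination hS (l+1) l * this
  have hcancel2 : (pq l)⁻¹ * ((1 - X^(2*l+1)) * (pq l * Sk 1))
      = (1 - X^(2*l+1)) * Sk 1 := by
    have := pq_mul_inv l
    linear_combination (1 - X^(2*l+1) : PS) * Sk 1 * this
  have hl2 : (l + 1) - 1 = l := by omega
  rw [mul_add, hcancel1, hcancel2] at h2
  rw [hl2]
  linear_combination h2

/-! ### Durfee rectangles -/

/-- auxiliary sums for the Durfee recursion -/
def PD (k : ℕ) : PS :=
  iSum fun m => X^(m*(m+k)) * (pq m)⁻¹ * (pq (m+k+1))⁻¹ * (1 - X^m - X^(m+k+1))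

lemma DS_sub (k : ℕ) : DS k - DS (k+1) = PD k := by
  simp only [DS, PD]
  rw [← iSum_sub]
  apply iSum_congr
  intro m
  have hidx : m + (k+1) = m + k + 1 := by omega
  rw [hidx]
  have h := pq_inv_one_sub (m+k)
  linear_combination -(X^(m*(m+k)) * (pq m)⁻¹ : PS) * h

lemma PD_rec (k : ℕ) : PD k = (-X^(k+1)) * PD (k+1) := by
  -- split the term into the (1-X^m) part and the rest
  have e1 : PD k = iSum (fun m => X^(m*(m+k)) * (1 - X^m) * (pq m)⁻¹ * (pq (m+k+1))⁻¹)
      - iSum (fun m => X^(m*(m+k)+(m+k+1)) * (pq m)⁻¹ * (pq (m+k+1))⁻¹) := by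
    rw [PD, ← iSum_sub]
    apply iSum_congr
    intro m
    ring
  have htame1 : Tame (fun m => (X:PS)^(m*(m+k)) * (1 - X^m) * (pq m)⁻¹ * (pq (m+k+1))⁻¹) := by
    intro i
    exact Dvd.dvd.mul_right (Dvd.dvd.mul_right (Dvd.dvd.mul_right
      (pow_dvd_pow _ (le_mul_add i k)) _) _) _
  rw [e1, iSum_shift htame1]
  have h0 : (X:PS)^(0*(0+k)) * (1 - X^0) * (pq 0)⁻¹ * (pq (0+k+1))⁻¹ = 0 := by simp
  rw [h0, zero_add, ← iSum_sub]
  rw [PD, iSum_mul (by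
    intro i
    exact Dvd.dvd.mul_right (Dvd.dvd.mul_right (Dvd.dvd.mul_right
      (pow_dvd_pow _ (le_mul_add i (k+1))) _) _) _)]
  apply iSum_congr
  intro m
  -- shifted first part minus second part equals -X^{k+1} * PD(k+1) term
  have hA := pq_inv_one_sub m           -- (1-X^{m+1})(pq (m+1))⁻¹ = (pq m)⁻¹
  have hB := pq_inv_one_sub (m+k+1)     -- (1-X^{m+k+2})(pq (m+k+2))⁻¹ = (pq (m+k+1))⁻¹
  rw [show m + (k+1) + 1 = m + k + 2 by omega, show m + 1 + k + 1 = m + k + 2 by omega,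
    show m + k + 1 + 1 = m + k + 2 by omega] at *
  linear_combination (X^((m+1)*(m+1+k)) * (pq (m+k+2))⁻¹ : PS) * hA
    + (X^(m*(m+k)+(m+k+1)) * (pq m)⁻¹ : PS) * hB

lemma PD_zero (k : ℕ) : PD k = 0 :=
  vanish_of_chain PD (fun j => -X^(j+1)) PD_rec
    (fun j => dvd_neg.mpr (dvd_pow_self X (by omega))) k

lemma DS_const (k : ℕ) : DS k = DS (k+1) := by
  have := DS_sub k
  rw [PD_zero] at this
  linear_combination this

/-! ### Ẽ recursion -/

lemma ES_rec (k : ℕ) : ES k = DS (k+1) - X^(k+1) * ES (k+1) := by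
  simp only [ES, DS]
  rw [iSum_mul (tame_ES (k+1)), ← iSum_sub]
  apply iSum_congr
  intro m
  rw [show m + (k+1) = m + k + 1 by omega]
  have h := pq_inv_one_sub (m+k)
  linear_combination -(X^(m*(m+k+1)) * (pq m)⁻¹ : PS) * h

/-! ### G recursion -/

lemma GS_rec (l : ℕ) (hl : 1 ≤ l) :
    GS l = ES (2*l) - X^(3*l+2) * GS (l+1) - X^(4*l+3) * ES (2*l+2) := by
  have key : GS l = ES (2*l)
      - iSum (fun m => X^l * (X^((2*l+1)*m + m^2) * (1 - X^m) *
          (pq m)⁻¹ * (pq (m+2*l))⁻¹ * (1 - X^(m+l))⁻¹)) := by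
    simp only [GS, ES]
    rw [← iSum_sub]
    apply iSum_congr
    intro m
    have h1 := one_sub_pow_mul_inv (m+l) (by omega)
    rw [show m + 2*l + 1 = m + 2*l + 1 by omega]
    linear_combination (X^((2*l+1)*m + m^2) * (pq m)⁻¹ * (pq (m+2*l))⁻¹ : PS) * h1
  have htameW : Tame (fun m => (X:PS)^l * (X^((2*l+1)*m + m^2) * (1 - X^m) *
      (pq m)⁻¹ * (pq (m+2*l))⁻¹ * (1 - X^(m+l))⁻¹)) := by
    intro i
    have : i ≤ (2*l+1)*i + i^2 := by nlinarith
    exact Dvd.dvd.mul_left (Dvd.dvd.mul_right (Dvd.dvd.mul_right (Dvd.dvd.mul_right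
      (Dvd.dvd.mul_right (pow_dvd_pow _ this) _) _) _) _) _
  rw [key, iSum_shift htameW]
  have h0 : (X:PS)^l * (X^((2*l+1)*0 + 0^2) * (1 - X^0) *
      (pq 0)⁻¹ * (pq (0+2*l))⁻¹ * (1 - X^(0+l))⁻¹) = 0 := by simp
  rw [h0, zero_add]
  have e2 : ∀ m : ℕ, (X:PS)^l * (X^((2*l+1)*(m+1) + (m+1)^2) * (1 - X^(m+1)) *
      (pq (m+1))⁻¹ * (pq (m+1+2*l))⁻¹ * (1 - X^(m+1+l))⁻¹)
      = X^(3*l+2) * (X^((2*(l+1)+1)*m + m^2) * (1 - X^(l+1)) *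
          (pq m)⁻¹ * (pq (m+2*(l+1)))⁻¹ * (1 - X^(m+(l+1)))⁻¹)
        + X^(4*l+3) * (X^(m*(m+(2*l+2)+1)) * (pq m)⁻¹ * (pq (m+(2*l+2)))⁻¹) := by
    intro m
    have hA := pq_inv_one_sub m
    have hB : (1 - X^(m+2*l+2) : PS) * (pq (m+2*l+2))⁻¹ = (pq (m+2*l+1))⁻¹ := by
      have := pq_inv_one_sub (m+2*l+1)
      rwa [show m+2*l+1+1 = m+2*l+2 by omega] at this
    have hC := one_sub_pow_mul_inv (m+l+1) (by omega)
    rw [show m + 1 + 2*l = m + 2*l + 1 by omega,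
      show m + (2*l+2) = m + 2*l + 2 by omega, show m + 2*(l+1) = m + 2*l + 2 by omega,
      show m + 1 + l = m + l + 1 by omega, show m + (l+1) = m + l + 1 by omega]
    linear_combination
      (X^((2*l+1)*(m+1) + (m+1)^2 + l) * (pq (m+2*l+1))⁻¹ * (1 - X^(m+l+1))⁻¹ : PS) * hA
      - (X^((2*l+1)*(m+1) + (m+1)^2 + l) * (pq m)⁻¹ * (1 - X^(m+l+1))⁻¹ : PS) * hB
      + (X^((2*l+1)*(m+1) + (m+1)^2 + 2*l+1) * (pq m)⁻¹ * (pq (m+2*l+2))⁻¹ : PS) * hC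
  rw [iSum_congr e2, iSum_add,
    ← iSum_mul (tame_GS (l+1)), ← iSum_mul (tame_ES (2*l+2))]
  simp only [GS, ES]
  ring

/-! ### `D_k = E` -/

lemma partial_e (M : ℕ) :
    ∑ m ∈ Finset.range (M+1), (X:PS)^m * (pq m)⁻¹ = (pq M)⁻¹ := by
  induction M with
  | zero => simp [pq_zero]
  | succ M ih =>
    rw [Finset.sum_range_succ, ih]
    linear_combination -pq_inv_one_sub M

lemma coeff_Sk_one (n : ℕ) : coeff (R := ℚ) n (Sk 1) = coeff (R := ℚ) n ((pq n)⁻¹) := by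
  rw [Sk]
  have : (iSum fun m => (X:PS)^(1*m) * (pq m)⁻¹) = iSum fun m => (X:PS)^m * (pq m)⁻¹ := by
    apply iSum_congr; intro m; rw [one_mul]
  rw [this, coeff_iSum, partial_e]

lemma coeff_pq_inv_stable {n k : ℕ} (h : n ≤ k) :
    coeff (R := ℚ) n ((pq k)⁻¹) = coeff (R := ℚ) n ((pq n)⁻¹) := by
  induction k with
  | zero =>
    have : n = 0 := by omega
    subst this; rfl
  | succ k ih =>
    rcases Nat.lt_or_ge n (k+1) with h1 | h1
    · have e : (pq (k+1))⁻¹ = (pq k)⁻¹ + X^(k+1) * (pq (k+1))⁻¹ := by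
        linear_combination pq_inv_one_sub k
      rw [e, map_add, coeff_X_pow_dvd (Dvd.intro _ rfl) (by omega), add_zero]
      exact ih (by omega)
    · have : n = k + 1 := by omega
      subst this; rfl

lemma DS_add (k j : ℕ) : DS k = DS (k + j) := by
  induction j with
  | zero => rfl
  | succ j ih => rw [ih, show k + (j+1) = (k+j) + 1 by omega, ← DS_const]

lemma DS_eq_E (k : ℕ) : DS k = Sk 1 := by
  ext n
  rw [coeff_Sk_one]
  rw [DS_add k (n+1)]
  set K := k + (n+1) with hK
  rw [DS, coeff_iSum]
  rw [Finset.sum_range_succ']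
  rw [map_add]
  have hz : coeff (R := ℚ) n (∑ i ∈ Finset.range n,
      (X:PS)^((i+1)*((i+1)+K)) * (pq (i+1))⁻¹ * (pq ((i+1)+K))⁻¹) = 0 := by
    rw [map_sum]
    apply Finset.sum_eq_zero
    intro i _
    apply coeff_X_pow_dvd (Dvd.dvd.mul_right (Dvd.dvd.mul_right (dvd_refl _) _) _)
    have : (i+1)*((i+1)+K) ≥ K := by nlinarith
    omega
  rw [hz, zero_add]
  have h0 : (X:PS)^(0*(0+K)) * (pq 0)⁻¹ * (pq (0+K))⁻¹ = (pq K)⁻¹ := by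
    simp [pq_zero]
  rw [h0]
  exact coeff_pq_inv_stable (by omega)

/-! ### Claim B -/

lemma claimB (l : ℕ) (hl : 1 ≤ l) :
    GS l + X^(3*l+2) * GS (l+1) = (1 - X^(2*l+1)) * Sk 1 := by
  have h1 := GS_rec l hl
  have h2 := ES_rec (2*l)
  have h3 := ES_rec (2*l+1)
  have h4 := DS_eq_E (2*l+1)
  have h5 := DS_eq_E (2*l+1+1)
  linear_combination h1 + h2 - (X^(2*l+1) : PS) * h3 + h4 - (X^(2*l+1) : PS) * h5

/-! ### Conclusion: `Fc = GS` -/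

lemma Fc_eq_GS (l : ℕ) (hl : 1 ≤ l) : Fc l = GS l := by
  have key : ∀ j : ℕ, Fc (j+1) - GS (j+1) = (-X^(3*(j+1)+2)) * (Fc (j+2) - GS (j+2)) := by
    intro j
    have hA := claimA (j+1) (by omega)
    have hB := claimB (j+1) (by omega)
    linear_combination hA - hB
  have := vanish_of_chain (fun j => Fc (j+1) - GS (j+1)) (fun j => -X^(3*(j+1)+2))
    (fun j => key j) (fun j => dvd_neg.mpr (dvd_pow_self X (by omega))) (l-1)
  have hll : l - 1 + 1 = l := by omega
  rw [hll] at this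
  linear_combination this

/-! ### Assembly -/

lemma exp_arith (w m : ℕ) :
    Nat.choose (w+1) 2 + ((w+1) + 1) * (m + (w+1))
      = (3 * (w+1) ^ 2 + (w+1)) / 2 + ((w+1) + 1) * m := by
  rw [Nat.choose_two_right]
  have h1 : (w+1)*(w+1-1) = w*w + w := by
    simp only [Nat.add_sub_cancel]
    ring
  have h2 : 3*(w+1)^2 + (w+1) = 3*(w*w) + 7*w + 4 := by ring
  have h3 : ((w+1)+1)*(m+(w+1)) = ((w+1)+1)*m + (w*w + 3*w + 2) := by ring
  omega

lemma iSum_pad_succ (F : ℕ → PS) (j : ℕ)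
    (htame : Tame (fun n => if n < j+1 then 0 else F (n-(j+1)))) :
    iSum (fun n => if n < j+1 then 0 else F (n-(j+1)))
      = iSum (fun n => if n < j then 0 else F (n-j)) := by
  rw [iSum_shift htame]
  have h0 : (if (0:ℕ) < j+1 then (0:PS) else F (0-(j+1))) = 0 := by
    rw [if_pos (by omega)]
  rw [h0, zero_add]
  apply iSum_congr
  intro i
  by_cases hij : i < j
  · rw [if_pos (by omega), if_pos hij]
  · rw [if_neg (by omega), if_neg hij, show i+1-(j+1) = i-j by omega]

lemma iSum_pad (F : ℕ → PS) (d : ℕ)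
    (htame : ∀ j, j ≤ d → Tame (fun n => if n < j then 0 else F (n-j))) :
    iSum (fun n => if n < d then 0 else F (n-d)) = iSum F := by
  induction d with
  | zero =>
    apply iSum_congr
    intro i
    rw [if_neg (by omega), Nat.sub_zero]
  | succ d ih =>
    rw [iSum_pad_succ F d (htame (d+1) (le_refl _))]
    exact ih (fun j hj => htame j (by omega))

/-- Equivalence of the two truncated forms of Euler's pentagonal number theorem:
`Σ_{n≥1} q^{C(ℓ,2)+(ℓ+1)n}/(q;q)_n [n-1 choose ℓ-1]_q
 = q^{(3ℓ²+ℓ)/2} Σ_{n≥0} q^{(2ℓ+1)n+n²}(1-q^ℓ)/((q;q)_n (q;q)_{n+2ℓ}(1-q^{n+ℓ}))`. -/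
theorem truncated_forms_equivalent (ℓ : ℕ) (hℓ : 1 ≤ ℓ) :
    iSum (fun n => if n = 0 then 0 else
        X ^ (Nat.choose ℓ 2 + (ℓ + 1) * n) * (pq n)⁻¹ * qbinom (n - 1) (ℓ - 1))
    = X ^ ((3 * ℓ ^ 2 + ℓ) / 2) *
        iSum (fun n => X ^ ((2 * ℓ + 1) * n + n ^ 2) * (1 - X ^ ℓ) *
          (pq n)⁻¹ * (pq (n + 2 * ℓ))⁻¹ * (1 - X ^ (n + ℓ))⁻¹) := by
  obtain ⟨w, rfl⟩ : ∃ w, ℓ = w + 1 := ⟨ℓ - 1, by omega⟩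
  set l := w + 1 with hldef
  set e := (3 * l ^ 2 + l) / 2 with hedef
  have hel : l ≤ e := by
    have : 2*l ≤ 3*l^2 + l := by nlinarith
    omega
  -- the shifted summand
  set A : ℕ → PS := fun m => (X^e * (pq (l-1))⁻¹) *
      (X^((l+1)*m) * (pq m)⁻¹ * (1 - X^(m+l))⁻¹) with hA
  -- tameness of padded A
  have htameA : ∀ j, j ≤ l → Tame (fun n => if n < j then 0 else A (n-j)) := by
    intro j hj i
    by_cases hij : i < j
    · simp only [if_pos hij]; exact dvd_zero _
    · simp only [if_neg hij]
      have hexp : (X:PS)^e * (pq (l-1))⁻¹ * (X^((l+1)*(i-j)) * (pq (i-j))⁻¹ * (1 - X^((i-j)+l))⁻¹)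
          = X^(e + (l+1)*(i-j)) * ((pq (l-1))⁻¹ * (pq (i-j))⁻¹ * (1 - X^((i-j)+l))⁻¹) := by
        rw [pow_add]; ring
      rw [hA]
      simp only
      rw [hexp]
      apply Dvd.dvd.mul_right
      apply pow_dvd_pow
      have : i - j + l ≥ i := by omega
      nlinarith [Nat.sub_add_cancel (le_of_not_gt hij)]
  -- identify the LHS terms with the padded terms
  have hterm : ∀ n, (if n = 0 then 0 else
        X ^ (Nat.choose l 2 + (l + 1) * n) * (pq n)⁻¹ * qbinom (n - 1) (l - 1))
      = (if n < l then 0 else A (n - l)) := by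
    intro n
    by_cases h0 : n = 0
    · subst h0
      rw [if_pos rfl, if_pos (by omega)]
    · rw [if_neg h0]
      by_cases hnl : n < l
      · rw [if_pos hnl]
        have : qbinom (n-1) (l-1) = 0 := by
          rw [qbinom, if_neg (by omega)]
        rw [this, mul_zero]
      · rw [if_neg hnl]
        obtain ⟨m, rfl⟩ : ∃ m, n = m + l := ⟨n - l, by omega⟩
        have hm : m + l - l = m := by omega
        rw [hm]
        have hq : qbinom (m+l-1) (l-1) = pq (m+l-1) * (pq (l-1))⁻¹ * (pq m)⁻¹ := by
          rw [qbinom, if_pos (by omega), show m+l-1-(l-1) = m by omega]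
        rw [hq]
        have hexp : Nat.choose l 2 + (l + 1) * (m + l) = e + (l+1) * m := exp_arith w m
        rw [hexp]
        have hpp : (pq (m+l))⁻¹ * pq (m+l-1) = (1 - X^(m+l) : PS)⁻¹ := by
          have := pq_inv_mul_pq (m+l-1)
          rwa [show m+l-1+1 = m+l by omega] at this
        rw [hA]
        simp only
        rw [pow_add]
        linear_combination (X^e * X^((l+1)*m) * (pq (l-1))⁻¹ * (pq m)⁻¹ : PS) * hpp
  calc iSum (fun n => if n = 0 then 0 else
        X ^ (Nat.choose l 2 + (l + 1) * n) * (pq n)⁻¹ * qbinom (n - 1) (l - 1))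
      = iSum (fun n => if n < l then 0 else A (n - l)) := iSum_congr hterm
    _ = iSum A := iSum_pad A l htameA
    _ = (X^e * (pq (l-1))⁻¹) * hS (l+1) l := by
        rw [hS, iSum_mul (tame_hS (l+1) l (by omega))]
    _ = X^e * Fc l := by rw [Fc]; ring
    _ = X^e * GS l := by rw [Fc_eq_GS l (by omega)]
    _ = _ := by rw [GS]
end
end

section
/- For all integers n ≥ 0, p5(n) satisfies the bounds (2n^3 + 36n^2 + 193n + 525)/480 - (n+1)/32 - 1 < p5(n) ≤ (2n^3 + 36n^2 + 193n + 525)/480 + (n+1)/32. -/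
open Finset

def Tset (m : ℕ) : Finset (ℕ × ℕ) :=
  (range (m+1) ×ˢ range (m+1)).filter (fun p => 2*p.1 + 4*p.2 ≤ m)

def hcnt (m : ℕ) : ℕ := (Tset m).card

def Sset (n : ℕ) : Finset (ℕ × ℕ × ℕ) :=
  (range (n+1) ×ˢ range (n+1) ×ˢ range (n+1)).filter
    (fun t => 2*t.1 + 4*t.2.1 + 5*t.2.2 ≤ n)

def gcnt (n : ℕ) : ℕ := (Sset n).card

lemma hcnt_rec (m : ℕ) : hcnt (m+4) = hcnt m + (m/2 + 3) := by
  classical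
  have hsplit := Finset.card_filter_add_card_filter_not
    (s := Tset (m+4)) (p := fun p => p.2 = 0)
  have h1 : ((Tset (m+4)).filter (fun p => p.2 = 0)).card = m/2 + 3 := by
    rw [show m/2 + 3 = (range (m/2+3)).card by simp]
    refine Finset.card_nbij' (i := fun p => p.1) (j := fun b => (b, 0)) ?_ ?_ ?_ ?_
    · rintro ⟨b, c⟩ hp
      simp only [Tset, mem_coe, mem_filter, mem_product, mem_range, and_true, true_and] at hp ⊢
      omega
    · intro b hb
      simp only [Tset, mem_coe, mem_filter, mem_product, mem_range, and_true, true_and] at hb ⊢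
      omega
    · rintro ⟨b, c⟩ hp
      simp only [mem_coe, mem_filter] at hp
      simp only [Prod.mk.injEq, true_and]
      omega
    · intro b _
      rfl
  have h2 : ((Tset (m+4)).filter (fun p => ¬ p.2 = 0)).card = (Tset m).card := by
    refine Finset.card_nbij' (i := fun p => (p.1, p.2 - 1)) (j := fun p => (p.1, p.2 + 1))
      ?_ ?_ ?_ ?_
    · rintro ⟨b, c⟩ hp
      simp only [Tset, mem_coe, mem_filter, mem_product, mem_range, and_true, true_and] at hp ⊢
      omega
    · rintro ⟨b, c⟩ hp
      simp only [Tset, mem_coe, mem_filter, mem_product, mem_range, and_true, true_and] at hp ⊢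
      omega
    · rintro ⟨b, c⟩ hp
      simp only [Tset, mem_coe, mem_filter, mem_product, mem_range, and_true, true_and] at hp
      simp only [Prod.mk.injEq, true_and]
      omega
    · rintro ⟨b, c⟩ _
      simp
  unfold hcnt
  omega

lemma gcnt_rec (n : ℕ) : gcnt (n+5) = gcnt n + hcnt (n+5) := by
  classical
  have hsplit := Finset.card_filter_add_card_filter_not
    (s := Sset (n+5)) (p := fun t => t.2.2 = 0)
  have h1 : ((Sset (n+5)).filter (fun t => t.2.2 = 0)).card = (Tset (n+5)).card := by
    refine Finset.card_nbij' (i := fun t => (t.1, t.2.1)) (j := fun p => (p.1, p.2, 0))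
      ?_ ?_ ?_ ?_
    · rintro ⟨b, c, d⟩ hp
      simp only [Sset, Tset, mem_coe, mem_filter, mem_product, mem_range, and_true, true_and] at hp ⊢
      omega
    · rintro ⟨b, c⟩ hp
      simp only [Sset, Tset, mem_coe, mem_filter, mem_product, mem_range, and_true, true_and] at hp ⊢
      omega
    · rintro ⟨b, c, d⟩ hp
      simp only [Sset, mem_coe, mem_filter, mem_product, mem_range, and_true, true_and] at hp
      simp only [Prod.mk.injEq, true_and]
      omega
    · rintro ⟨b, c⟩ _
      rfl
  have h2 : ((Sset (n+5)).filter (fun t => ¬ t.2.2 = 0)).card = (Sset n).card := by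
    refine Finset.card_nbij' (i := fun t => (t.1, t.2.1, t.2.2 - 1))
      (j := fun t => (t.1, t.2.1, t.2.2 + 1)) ?_ ?_ ?_ ?_
    · rintro ⟨b, c, d⟩ hp
      simp only [Sset, mem_coe, mem_filter, mem_product, mem_range, and_true, true_and] at hp ⊢
      omega
    · rintro ⟨b, c, d⟩ hp
      simp only [Sset, mem_coe, mem_filter, mem_product, mem_range, and_true, true_and] at hp ⊢
      omega
    · rintro ⟨b, c, d⟩ hp
      simp only [Sset, mem_coe, mem_filter, mem_product, mem_range, and_true, true_and] at hp
      simp only [Prod.mk.injEq, true_and]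
      omega
    · rintro ⟨b, c, d⟩ _
      simp
  unfold gcnt hcnt
  omega

lemma hcnt_closed (m : ℕ) : hcnt m = (m/4 + 1) * (m/4 + m % 4 / 2 + 1) := by
  induction m using Nat.strong_induction_on with
  | _ m ih =>
    match m, ih with
    | 0, _ => decide
    | 1, _ => decide
    | 2, _ => decide
    | 3, _ => decide
    | (m+4), ih =>
      rw [hcnt_rec, ih m (by omega)]
      have h4 : (m+4)/4 = m/4 + 1 := by omega
      have h4' : (m+4) % 4 = m % 4 := by omega
      rw [h4, h4']
      have : m/2 = 2 * (m/4) + (m % 4)/2 := by omega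
      rw [this]; ring

lemma gcnt_base : ∀ n < 5, gcnt n = [1,1,2,2,4].getD n 0 := by decide

lemma gcnt_rec20 (n : ℕ) :
    4 * gcnt (n+20) + 5 * (n % 2) = 4 * gcnt n + (n^2 + 32*n + 288) := by
  have e1 := gcnt_rec n
  have e2 := gcnt_rec (n+5)
  have e3 := gcnt_rec (n+10)
  have e4 := gcnt_rec (n+15)
  simp only [show n+5+5 = n+10 from by ring] at e2
  simp only [show n+10+5 = n+15 from by ring] at e3
  simp only [show n+15+5 = n+20 from by ring] at e4
  have hD : 4 * (hcnt (n+5) + hcnt (n+10) + hcnt (n+15) + hcnt (n+20)) + 5 * (n % 2)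
      = n^2 + 32*n + 288 := by
    rw [hcnt_closed (n+5), hcnt_closed (n+10), hcnt_closed (n+15), hcnt_closed (n+20)]
    obtain ⟨q, r, hr, rfl⟩ : ∃ q r, r < 4 ∧ n = 4*q + r :=
      ⟨n/4, n%4, Nat.mod_lt _ (by norm_num), by omega⟩
    interval_cases r <;>
    · simp only [show ∀ a b : ℕ, (4*q + a + b)/4 = q + (a+b)/4 from fun a b => by omega,
        show ∀ a b : ℕ, (4*q + a + b) % 4 = (a+b) % 4 from fun a b => by omega,
        show ∀ a : ℕ, (4*q + a) % 2 = a % 2 from fun a => by omega]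
      norm_num
      ring
  omega

noncomputable section

/-- `p5 m`: the number of partitions of `m` into parts from `{1, 2, 4, 5}`. -/
def p5 (m : ℕ) : ℕ :=
  Nat.card {P : Nat.Partition m // ∀ x ∈ P.parts, x = 1 ∨ x = 2 ∨ x = 4 ∨ x = 5}

open Multiset in
lemma multiset_decomp (s : Multiset ℕ) (hs : ∀ x ∈ s, x = 1 ∨ x = 2 ∨ x = 4 ∨ x = 5) :
    s = replicate (s.count 1) 1 + replicate (s.count 2) 2 +
        replicate (s.count 4) 4 + replicate (s.count 5) 5 := by
  ext k
  simp only [count_add, count_replicate]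
  by_cases h1 : k = 1
  · subst h1; simp
  by_cases h2 : k = 2
  · subst h2; simp
  by_cases h4 : k = 4
  · subst h4; simp
  by_cases h5 : k = 5
  · subst h5; simp
  have : k ∉ s := fun hk => by rcases hs k hk with h|h|h|h <;> simp_all
  rw [count_eq_zero.2 this]
  simp [Ne.symm h1, Ne.symm h2, Ne.symm h4, Ne.symm h5, h1, h2, h4, h5]

open Multiset in
lemma multiset_sum_eq (s : Multiset ℕ) (hs : ∀ x ∈ s, x = 1 ∨ x = 2 ∨ x = 4 ∨ x = 5) :
    s.sum = s.count 1 + 2 * s.count 2 + 4 * s.count 4 + 5 * s.count 5 := by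
  conv_lhs => rw [multiset_decomp s hs]
  simp [sum_replicate]
  ring

open Multiset in
def partEquiv (n : ℕ) :
    {P : Nat.Partition n // ∀ x ∈ P.parts, x = 1 ∨ x = 2 ∨ x = 4 ∨ x = 5} ≃
    {t : ℕ × ℕ × ℕ // 2*t.1 + 4*t.2.1 + 5*t.2.2 ≤ n} where
  toFun P := ⟨(P.1.parts.count 2, P.1.parts.count 4, P.1.parts.count 5), by
    have := multiset_sum_eq P.1.parts P.2
    have hsum := P.1.parts_sum
    dsimp only
    omega⟩
  invFun t := ⟨⟨replicate (n - (2*t.1.1 + 4*t.1.2.1 + 5*t.1.2.2)) 1 +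
      replicate t.1.1 2 + replicate t.1.2.1 4 + replicate t.1.2.2 5, by
        intro i hi
        simp only [Multiset.mem_add, Multiset.mem_replicate] at hi
        rcases hi with ((h|h)|h)|h <;> omega, by
        have ht := t.2
        simp [sum_replicate]
        omega⟩, by
      intro x hx
      simp only [Multiset.mem_add, Multiset.mem_replicate] at hx
      rcases hx with ((h|h)|h)|h <;> omega⟩
  left_inv := by
    rintro ⟨P, hP⟩
    ext1
    ext1
    dsimp only
    conv_rhs => rw [multiset_decomp P.parts hP]
    have := multiset_sum_eq P.parts hP
    have hsum := P.parts_sum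
    have hc1 : n - (2*P.parts.count 2 + 4*P.parts.count 4 + 5*P.parts.count 5)
        = P.parts.count 1 := by omega
    rw [hc1]
  right_inv := by
    rintro ⟨⟨b, c, d⟩, ht⟩
    ext1
    dsimp only
    refine Prod.ext ?_ (Prod.ext ?_ ?_) <;>
    · simp only [Multiset.count_add, Multiset.count_replicate]
      norm_num


lemma gcnt_bounds (n : ℕ) :
    2*n^3 + 36*n^2 + 178*n + 30 < 480 * gcnt n ∧
    480 * gcnt n ≤ 2*n^3 + 36*n^2 + 208*n + 540 := by
  induction n using Nat.strong_induction_on with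
  | _ n ih =>
    by_cases hn : n < 20
    · clear ih
      have g0 : gcnt 0 = 1 := by decide
      have g1 : gcnt 1 = 1 := by decide
      have g2 : gcnt 2 = 2 := by decide
      have g3 : gcnt 3 = 2 := by decide
      have g4 : gcnt 4 = 4 := by decide
      have g5 : gcnt 5 = 5 := by
        have := gcnt_rec 0
        rw [hcnt_closed] at this
        norm_num at this
        omega
      have g6 : gcnt 6 = 7 := by
        have := gcnt_rec 1
        rw [hcnt_closed] at this
        norm_num at this
        omega
      have g7 : gcnt 7 = 8 := by
        have := gcnt_rec 2
        rw [hcnt_closed] at this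
        norm_num at this
        omega
      have g8 : gcnt 8 = 11 := by
        have := gcnt_rec 3
        rw [hcnt_closed] at this
        norm_num at this
        omega
      have g9 : gcnt 9 = 13 := by
        have := gcnt_rec 4
        rw [hcnt_closed] at this
        norm_num at this
        omega
      have g10 : gcnt 10 = 17 := by
        have := gcnt_rec 5
        rw [hcnt_closed] at this
        norm_num at this
        omega
      have g11 : gcnt 11 = 19 := by
        have := gcnt_rec 6
        rw [hcnt_closed] at this
        norm_num at this
        omega
      have g12 : gcnt 12 = 24 := by
        have := gcnt_rec 7
        rw [hcnt_closed] at this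
        norm_num at this
        omega
      have g13 : gcnt 13 = 27 := by
        have := gcnt_rec 8
        rw [hcnt_closed] at this
        norm_num at this
        omega
      have g14 : gcnt 14 = 33 := by
        have := gcnt_rec 9
        rw [hcnt_closed] at this
        norm_num at this
        omega
      have g15 : gcnt 15 = 37 := by
        have := gcnt_rec 10
        rw [hcnt_closed] at this
        norm_num at this
        omega
      have g16 : gcnt 16 = 44 := by
        have := gcnt_rec 11
        rw [hcnt_closed] at this
        norm_num at this
        omega
      have g17 : gcnt 17 = 49 := by
        have := gcnt_rec 12
        rw [hcnt_closed] at this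
        norm_num at this
        omega
      have g18 : gcnt 18 = 57 := by
        have := gcnt_rec 13
        rw [hcnt_closed] at this
        norm_num at this
        omega
      have g19 : gcnt 19 = 63 := by
        have := gcnt_rec 14
        rw [hcnt_closed] at this
        norm_num at this
        omega
      interval_cases n <;> norm_num [g0,g1,g2,g3,g4,g5,g6,g7,g8,g9,g10,g11,g12,g13,g14,g15,g16,g17,g18,g19]
    · obtain ⟨m, rfl⟩ : ∃ m, n = m + 20 := ⟨n - 20, by omega⟩
      obtain ⟨ih1, ih2⟩ := ih m (by omega)
      have hrec := gcnt_rec20 m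
      have hm2 : m % 2 ≤ 1 := by omega
      have hm0 : 0 ≤ m % 2 := Nat.zero_le _
      zify at ih1 ih2 hrec hm2 hm0 ⊢
      constructor
      · ring_nf
        ring_nf at ih1 hrec
        linarith
      · ring_nf
        ring_nf at ih2 hrec
        linarith

lemma p5_eq_gcnt (n : ℕ) : p5 n = gcnt n := by
  have e : {t : ℕ × ℕ × ℕ // 2*t.1 + 4*t.2.1 + 5*t.2.2 ≤ n} ≃ {t // t ∈ Sset n} :=
    Equiv.subtypeEquivRight (fun t => by
      simp only [Sset, mem_filter, mem_product, mem_range]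
      omega)
  unfold p5 gcnt
  rw [Nat.card_congr ((partEquiv n).trans e), Nat.card_eq_finsetCard]

/-- For all `n ≥ 0`,
`(2n³+36n²+193n+525)/480 - (n+1)/32 - 1 < p5(n) ≤ (2n³+36n²+193n+525)/480 + (n+1)/32`. -/
theorem p5_bounds (n : ℕ) :
    ((2 * n ^ 3 + 36 * n ^ 2 + 193 * n + 525 : ℚ)) / 480 - (n + 1) / 32 - 1 < (p5 n : ℚ) ∧
    (p5 n : ℚ) ≤ ((2 * n ^ 3 + 36 * n ^ 2 + 193 * n + 525 : ℚ)) / 480 + (n + 1) / 32 := by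
  obtain ⟨h1, h2⟩ := gcnt_bounds n
  rw [p5_eq_gcnt]
  have c1 : ((2*n^3 + 36*n^2 + 178*n + 30 : ℕ) : ℚ) < ((480 * gcnt n : ℕ) : ℚ) := by
    exact_mod_cast h1
  have c2 : ((480 * gcnt n : ℕ) : ℚ) ≤ ((2*n^3 + 36*n^2 + 208*n + 540 : ℕ) : ℚ) := by
    exact_mod_cast h2
  push_cast at c1 c2
  constructor <;> [linarith; linarith]
end
end
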